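/- arXiv:1606.02169 — 9 statements merged into one kernel-verified Lean document; each statement's English description precedes it below -/
import Mathlib

section
/- Let Q be a quadratic form on a finite-dimensional real vector space V of signature (2, dim V - 2), and let Z : V → ℂ be a real-linear map whose kernel K = ker Z is negative definite with respect to Q. Then Q is positive definite on the Q-orthogonal complement K⊥ of K, and the restriction Z|_{K⊥} : K⊥ → ℂ is an isomorphism of real vector spaces. -/
open Module

/-- Let `Q` be a quadratic form on a finite-dimensional real vector space
`V` of signature `(2, dim V − 2)` (a maximal positive definite subspace has dimension `2`,
a maximal negative definite subspace has dimension `dim V − 2`), and let `Z : V → ℂ` be a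
real-linear map whose kernel `K = ker Z` is negative definite with respect to `Q`.  Then `Q`
is positive definite on the `Q`-orthogonal complement `K^⊥` of `K`, and the restriction
`Z|_{K^⊥} : K^⊥ → ℂ` is an isomorphism of real vector spaces (i.e. a linear bijection). -/
theorem stmt0 {V : Type*} [AddCommGroup V] [Module ℝ V] [FiniteDimensional ℝ V]
    (Q : QuadraticForm ℝ V) (Z : V →ₗ[ℝ] ℂ)
    (hposmax : ∀ W : Submodule ℝ V, (∀ w ∈ W, w ≠ 0 → 0 < Q w) → finrank ℝ W ≤ 2)
    (hposex : ∃ W : Submodule ℝ V, finrank ℝ W = 2 ∧ ∀ w ∈ W, w ≠ 0 → 0 < Q w)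
    (hnegmax : ∀ W : Submodule ℝ V, (∀ w ∈ W, w ≠ 0 → Q w < 0) →
      finrank ℝ W ≤ finrank ℝ V - 2)
    (hnegex : ∃ W : Submodule ℝ V, finrank ℝ W = finrank ℝ V - 2 ∧
      ∀ w ∈ W, w ≠ 0 → Q w < 0)
    (hker : ∀ v ∈ LinearMap.ker Z, v ≠ 0 → Q v < 0) :
    (∀ v ∈ LinearMap.BilinForm.orthogonal Q.polarBilin (LinearMap.ker Z), v ≠ 0 → 0 < Q v) ∧
    Function.Bijective
      (fun v : LinearMap.BilinForm.orthogonal Q.polarBilin (LinearMap.ker Z) => Z v.1) := by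
  classical
  set K : Submodule ℝ V := LinearMap.ker Z with hK
  set P : Submodule ℝ V := LinearMap.BilinForm.orthogonal Q.polarBilin K with hP
  set n : ℕ := finrank ℝ V with hn
  -- trivial intersection of K and P
  have hKP : ∀ v, v ∈ K → v ∈ P → v = 0 := by
    intro v hvK hvP
    by_contra hv0
    have h1 : Q v < 0 := hker v hvK hv0
    have h2 : QuadraticMap.polar Q v v = 0 := hvP v hvK
    rw [QuadraticMap.polar_self] at h2
    rw [two_smul] at h2
    linarith
  -- dim K ≥ n - 2
  have hrank : finrank ℝ (LinearMap.range Z) + finrank ℝ K = n :=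
    LinearMap.finrank_range_add_finrank_ker Z
  have hrng2 : finrank ℝ (LinearMap.range Z) ≤ 2 := by
    have := Submodule.finrank_le (LinearMap.range Z)
    simpa [Complex.finrank_real_complex] using this
  have hKge : n - 2 ≤ finrank ℝ K := by omega
  have hKle : finrank ℝ K ≤ n - 2 := hnegmax K hker
  obtain ⟨W, hW2, hWpos⟩ := hposex
  have hn2 : 2 ≤ n := hW2 ▸ Submodule.finrank_le W
  -- Q ≤ 0 on K
  have hQK : ∀ k ∈ K, Q k ≤ 0 := by
    intro k hk
    rcases eq_or_ne k 0 with rfl | h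
    · simp
    · exact le_of_lt (hker k hk h)
  -- positive definiteness on P
  have hpos : ∀ v ∈ P, v ≠ 0 → 0 < Q v := by
    intro v hvP hv0
    by_contra hle
    push_neg at hle
    -- Q ≤ 0 on U = K ⊔ span v
    set U : Submodule ℝ V := K ⊔ Submodule.span ℝ {v} with hU
    have hQU : ∀ u ∈ U, Q u ≤ 0 := by
      intro u hu
      rw [hU, Submodule.mem_sup] at hu
      obtain ⟨k, hk, w, hw, rfl⟩ := hu
      obtain ⟨t, rfl⟩ := Submodule.mem_span_singleton.mp hw
      have hpol : QuadraticMap.polar Q k (t • v) = t • QuadraticMap.polar Q k v :=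
        QuadraticMap.polar_smul_right Q t k v
      have hpol0 : QuadraticMap.polar Q k v = 0 := hvP k hk
      have hexp : Q (k + t • v) = Q k + Q (t • v) + QuadraticMap.polar Q k (t • v) := by
        simp only [QuadraticMap.polar]; ring
      rw [hexp, hpol, hpol0, QuadraticMap.map_smul]
      have h1 : Q k ≤ 0 := hQK k hk
      have h2 : (t * t) • Q v ≤ 0 := by
        have := mul_self_nonneg t
        have : (t * t) * Q v ≤ 0 := mul_nonpos_of_nonneg_of_nonpos this hle
        simpa [smul_eq_mul] using this
      simp only [smul_eq_mul, smul_zero]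
      nlinarith [h1, h2]
    -- v ∉ K, so finrank U ≥ finrank K + 1 ≥ n - 1
    have hvK : v ∉ K := fun h => hv0 (hKP v h hvP)
    have hKU : K < U := by
      refine lt_of_le_of_ne le_sup_left ?_
      intro h
      exact hvK (h ▸ Submodule.mem_sup_right (Submodule.mem_span_singleton_self v))
    have hUge : finrank ℝ K + 1 ≤ finrank ℝ U :=
      Submodule.finrank_lt_finrank_of_lt hKU
    -- W ∩ U is nontrivial
    have hsum : finrank ℝ (W ⊔ U : Submodule ℝ V) + finrank ℝ (W ⊓ U : Submodule ℝ V) =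
        finrank ℝ W + finrank ℝ U := Submodule.finrank_sup_add_finrank_inf_eq W U
    have hsup : finrank ℝ (W ⊔ U : Submodule ℝ V) ≤ n := Submodule.finrank_le _
    have hinf : 1 ≤ finrank ℝ (W ⊓ U : Submodule ℝ V) := by omega
    have : (W ⊓ U : Submodule ℝ V) ≠ ⊥ := by
      intro h
      rw [h, finrank_bot] at hinf
      omega
    obtain ⟨w, hw, hw0⟩ := Submodule.exists_mem_ne_zero_of_ne_bot this
    exact absurd (hQU w hw.2) (not_le.mpr (hWpos w hw.1 hw0))
  refine ⟨hpos, ?_⟩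
  -- dimension of P is 2
  have hrefl : Q.polarBilin.IsRefl := by
    intro x y h
    rwa [QuadraticMap.polarBilin_apply_apply, QuadraticMap.polar_comm] at h
  have horth := LinearMap.BilinForm.finrank_add_finrank_orthogonal hrefl (W := K)
  have hPge : 2 ≤ finrank ℝ P := by
    rw [← hP] at horth
    omega
  have hPle : finrank ℝ P ≤ 2 := hposmax P hpos
  have hPeq : finrank ℝ P = finrank ℝ ℂ := by
    rw [Complex.finrank_real_complex]; omega
  -- the restricted map
  set L : P →ₗ[ℝ] ℂ := Z.comp P.subtype with hL
  have hinj : Function.Injective L := by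
    rw [← LinearMap.ker_eq_bot]
    rw [Submodule.eq_bot_iff]
    rintro ⟨x, hx⟩ hxk
    have hxK : x ∈ K := by
      simpa [hL, hK] using hxk
    have : x = 0 := hKP x hxK hx
    simp [this]
  have hsurj : Function.Surjective L :=
    (LinearMap.injective_iff_surjective_of_finrank_eq_finrank hPeq).mp hinj
  exact ⟨hinj, hsurj⟩
end

section
/- Let V be a finite-dimensional real vector space, Q a quadratic form on V, Z : V → ℂ an ℝ-linear map with ker Z negative definite for Q, and suppose Q(v) = |Z(v)|² − ‖p(v)‖² where p : V → ker Z is the Q-orthogonal projection and ‖·‖ is the norm given by −Q on ker Z. If u : ker Z → ℂ is ℝ-linear with operator norm ‖u‖ < 1, then ker(Z + u ∘ p) is also negative definite with respect to Q. -/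
/-!
On `ker (Z + u ∘ p)` we have `Z v = -u (p v)`, so
`Q v = ‖u (p v)‖² + Q (p v) ≤ (1 - c²) Q (p v)`, which is negative because `p v` is a nonzero
vector of the negative definite `ker Z`: if `p v` vanished, so would `Z v`, and then `v = p v = 0`.
-/

theorem Submodule.eq_zero_of_mem_of_retraction_apply_eq_zero {R V : Type*} [Ring R]
    [AddCommGroup V] [Module R V] {K : Submodule R V} (p : V →ₗ[R] K)
    (hp : ∀ k : K, p (k : V) = k) {v : V} (hvK : v ∈ K) (hpv : p v = 0) : v = 0 := by
  simpa [hp ⟨v, hvK⟩] using congrArg Subtype.val hpv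

theorem QuadraticMap.apply_le_one_sub_sq_mul_of_add_comp_eq_zero {V E : Type*}
    [AddCommGroup V] [Module ℝ V] [SeminormedAddCommGroup E] (Q : QuadraticForm ℝ V)
    {K : Submodule ℝ V} (Z : V → E) (p : V → K) (hQ : ∀ v : V, Q v = ‖Z v‖ ^ 2 + Q (p v))
    (u : K → E) {c : ℝ} (hc : ∀ k : K, ‖u k‖ ^ 2 ≤ c ^ 2 * -Q k) {v : V}
    (hv : Z v + u (p v) = 0) : Q v ≤ (1 - c ^ 2) * Q (p v) := by
  have hZv : ‖Z v‖ = ‖u (p v)‖ := by rw [eq_neg_of_add_eq_zero_left hv, norm_neg]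
  calc Q v = ‖u (p v)‖ ^ 2 + Q (p v) := by rw [hQ v, hZv]
    _ ≤ c ^ 2 * -Q (p v) + Q (p v) := by gcongr; exact hc (p v)
    _ = (1 - c ^ 2) * Q (p v) := by ring

theorem stmt1_general {V : Type*} [AddCommGroup V] [Module ℝ V]
    (Q : QuadraticForm ℝ V) (Z : V →ₗ[ℝ] ℂ)
    (hker : ∀ v ∈ LinearMap.ker Z, v ≠ 0 → Q v < 0)
    (p : V →ₗ[ℝ] LinearMap.ker Z)
    (hp : ∀ k : LinearMap.ker Z, p (k : V) = k)
    (hQ : ∀ v : V, Q v = ‖Z v‖ ^ 2 + Q ((p v : V)))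
    (u : LinearMap.ker Z →ₗ[ℝ] ℂ)
    (hu : ∃ c : ℝ, 0 ≤ c ∧ c < 1 ∧ ∀ k : LinearMap.ker Z,
      ‖u k‖ ^ 2 ≤ c ^ 2 * (- Q (k : V))) :
    ∀ v : V, Z v + u (p v) = 0 → v ≠ 0 → Q v < 0 := by
  obtain ⟨c, hc0, hc1, hc⟩ := hu
  intro v hv hv0
  have hpv : (p v : V) ≠ 0 := by
    intro hpv
    have hpv' : p v = 0 := Subtype.ext hpv
    have hZv : v ∈ LinearMap.ker Z := by simpa [hpv'] using hv
    exact hv0 (Submodule.eq_zero_of_mem_of_retraction_apply_eq_zero p hp hZv hpv')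
  have hc_sq : 0 < 1 - c ^ 2 := sub_pos.2 (pow_lt_one₀ hc0 hc1 two_ne_zero)
  calc Q v ≤ (1 - c ^ 2) * Q (p v) :=
        QuadraticMap.apply_le_one_sub_sq_mul_of_add_comp_eq_zero Q Z p hQ u hc hv
    _ < 0 := mul_neg_of_pos_of_neg hc_sq (hker _ (p v).2 hpv)

/-- Let `V` be a finite-dimensional real vector space, `Q` a quadratic form
on `V`, `Z : V → ℂ` an `ℝ`-linear map whose kernel is negative definite for `Q`, and suppose
`Q(v) = |Z(v)|² − ‖p(v)‖²` where `p : V → ker Z` is the `Q`-orthogonal projection and `‖·‖` is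
the norm given by `−Q` on `ker Z` (so `‖k‖² = −Q(k)`, i.e. `Q(v) = |Z(v)|² + Q(p(v))`).
If `u : ker Z → ℂ` is `ℝ`-linear with operator norm `‖u‖ < 1` (with respect to that norm), then
`ker (Z + u ∘ p)` is also negative definite with respect to `Q`. -/
theorem stmt1 {V : Type*} [AddCommGroup V] [Module ℝ V] [FiniteDimensional ℝ V]
    (Q : QuadraticForm ℝ V) (Z : V →ₗ[ℝ] ℂ)
    (hker : ∀ v ∈ LinearMap.ker Z, v ≠ 0 → Q v < 0)
    (p : V →ₗ[ℝ] LinearMap.ker Z)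
    (hp : ∀ k : LinearMap.ker Z, p (k : V) = k)
    (hQ : ∀ v : V, Q v = ‖Z v‖ ^ 2 + Q ((p v : V)))
    (u : LinearMap.ker Z →ₗ[ℝ] ℂ)
    (hu : ∃ c : ℝ, 0 ≤ c ∧ c < 1 ∧ ∀ k : LinearMap.ker Z,
      ‖u k‖ ^ 2 ≤ c ^ 2 * (- Q (k : V))) :
    ∀ v : V, Z v + u (p v) = 0 → v ≠ 0 → Q v < 0 :=
  stmt1_general Q Z hker p hp hQ u hu
end

section
/- Let A, E be nonzero objects of an abelian category equipped with a stability function Z, and for t ∈ [0,1] let Z_t = Z + t·w for a real-valued homomorphism w such that each Z_t is a stability function. Denote by φ^t(F) ∈ (0,1] the phase of F with respect to Z_t. Then the set {t ∈ [0,1] : φ^t(A) ≥ φ^t(E)} is a (possibly empty) closed subinterval of [0,1] containing one of the endpoints 0 or 1. -/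
open Complex

/-- For two points in the open upper half plane, comparison of arguments is
equivalent to a cross-product inequality. -/
lemma arg_le_arg_iff_aux {x y : ℂ} (hx : 0 < x.im) (hy : 0 < y.im) :
    x.arg ≤ y.arg ↔ y.re * x.im ≤ x.re * y.im := by
  have hx0 : x ≠ 0 := fun h => by simp [h] at hx
  have hy0 : y ≠ 0 := fun h => by simp [h] at hy
  have hxpos : 0 < x.arg := by
    rcases lt_or_eq_of_le (arg_nonneg_iff.mpr hx.le) with h | h
    · exact h
    · exfalso
      have := arg_eq_zero_iff.mp h.symm
      exact absurd this.2 (ne_of_gt hx)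
  have hypos : 0 < y.arg := by
    rcases lt_or_eq_of_le (arg_nonneg_iff.mpr hy.le) with h | h
    · exact h
    · exfalso
      have := arg_eq_zero_iff.mp h.symm
      exact absurd this.2 (ne_of_gt hy)
  have hxlt : x.arg < Real.pi := arg_lt_pi_iff.mpr (Or.inr (ne_of_gt hx))
  have hylt : y.arg < Real.pi := arg_lt_pi_iff.mpr (Or.inr (ne_of_gt hy))
  have hsub : (y / x).arg = y.arg - x.arg := by
    have h1 : ((y / x).arg : Real.Angle) = ((y.arg - x.arg : ℝ) : Real.Angle) := by
      rw [arg_div_coe_angle hy0 hx0, Real.Angle.coe_sub]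
    have h2 : ((y / x).arg : Real.Angle).toReal = (y / x).arg :=
      Real.Angle.toReal_coe_eq_self_iff.mpr ⟨neg_pi_lt_arg _, arg_le_pi _⟩
    have h3 : (((y.arg - x.arg : ℝ) : Real.Angle)).toReal = y.arg - x.arg :=
      Real.Angle.toReal_coe_eq_self_iff.mpr ⟨by linarith, by linarith⟩
    rw [← h2, h1, h3]
  have key : x.arg ≤ y.arg ↔ 0 ≤ (y / x).im := by
    rw [← arg_nonneg_iff, hsub]
    constructor <;> intro h <;> linarith
  rw [key, div_im]
  have hns : 0 < normSq x := normSq_pos.mpr hx0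
  rw [div_sub_div_same, le_div_iff₀ hns, zero_mul, sub_nonneg, mul_comm y.im x.re]

/-- The set of `t ∈ [0,1]` where a linear function is nonnegative is a closed
interval containing an endpoint (when nonempty). -/
lemma linear_interval (c d : ℝ)
    (h : ({t ∈ Set.Icc (0 : ℝ) 1 | 0 ≤ c + t * d}).Nonempty) :
    ∃ a b : ℝ, 0 ≤ a ∧ a ≤ b ∧ b ≤ 1 ∧
      {t ∈ Set.Icc (0 : ℝ) 1 | 0 ≤ c + t * d} = Set.Icc a b ∧ (a = 0 ∨ b = 1) := by
  obtain ⟨t0, ht0⟩ := h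
  obtain ⟨⟨ht01, ht02⟩, ht03⟩ := ht0
  rcases lt_trichotomy d 0 with hd | hd | hd
  · -- d < 0 : interval [0, min 1 (c/(-d))]
    have hc : 0 ≤ c := by nlinarith
    have hnd : 0 < -d := by linarith
    refine ⟨0, min 1 (c / (-d)), le_refl 0,
      le_min zero_le_one (div_nonneg hc hnd.le), min_le_left _ _, ?_, Or.inl rfl⟩
    ext t
    simp only [Set.mem_setOf_eq, Set.mem_Icc, le_min_iff]
    constructor
    · rintro ⟨⟨h1, h2⟩, h3⟩
      exact ⟨h1, h2, (le_div_iff₀ hnd).mpr (by nlinarith)⟩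
    · rintro ⟨h1, h2, h3⟩
      have := (le_div_iff₀ hnd).mp h3
      exact ⟨⟨h1, h2⟩, by nlinarith⟩
  · -- d = 0
    subst hd
    have hc : 0 ≤ c := by nlinarith
    refine ⟨0, 1, le_refl 0, zero_le_one, le_refl 1, ?_, Or.inl rfl⟩
    ext t
    simp only [Set.mem_setOf_eq, Set.mem_Icc, mul_zero, add_zero]
    tauto
  · -- d > 0 : interval [max 0 (-c/d), 1]
    have hcd : 0 ≤ c + d := by nlinarith
    refine ⟨max 0 (-c / d), 1, le_max_left _ _,
      max_le zero_le_one ((div_le_one hd).mpr (by linarith)), le_refl 1, ?_, Or.inr rfl⟩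
    ext t
    simp only [Set.mem_setOf_eq, Set.mem_Icc, max_le_iff]
    constructor
    · rintro ⟨⟨h1, h2⟩, h3⟩
      exact ⟨⟨h1, (div_le_iff₀ hd).mpr (by nlinarith)⟩, h2⟩
    · rintro ⟨⟨h1, h2⟩, h3⟩
      have := (div_le_iff₀ hd).mp h2
      exact ⟨⟨h1, h3⟩, by nlinarith⟩

/-- Let `A`, `E` be nonzero objects with central charges `zA`, `zE` lying in
the semi-closed upper half plane, and for `t ∈ [0,1]` let `Z_t = Z + t·w` for a real-valued
additive `w` (so `Z_t(A) = zA + t·wA`, `Z_t(E) = zE + t·wE` with `wA wE : ℝ`), such that each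
`Z_t` is a stability function (i.e. the charges stay in the semi-closed upper half plane).
Phases are `φ^t(F) = (1/π) arg Z_t(F) ∈ (0,1]`.  Then the set
`{t ∈ [0,1] : φ^t(A) ≥ φ^t(E)}` is, if non-empty, a closed subinterval of `[0,1]`
containing one of the endpoints `0` or `1`. -/
theorem stmt5 (zA zE : ℂ) (wA wE : ℝ)
    (hA : ∀ t ∈ Set.Icc (0 : ℝ) 1,
      0 < (zA + ((t * wA : ℝ) : ℂ)).im ∨
        ((zA + ((t * wA : ℝ) : ℂ)).im = 0 ∧ (zA + ((t * wA : ℝ) : ℂ)).re < 0))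
    (hE : ∀ t ∈ Set.Icc (0 : ℝ) 1,
      0 < (zE + ((t * wE : ℝ) : ℂ)).im ∨
        ((zE + ((t * wE : ℝ) : ℂ)).im = 0 ∧ (zE + ((t * wE : ℝ) : ℂ)).re < 0)) :
    ({t ∈ Set.Icc (0 : ℝ) 1 |
        (zE + ((t * wE : ℝ) : ℂ)).arg ≤ (zA + ((t * wA : ℝ) : ℂ)).arg}).Nonempty →
      ∃ a b : ℝ, 0 ≤ a ∧ a ≤ b ∧ b ≤ 1 ∧
        {t ∈ Set.Icc (0 : ℝ) 1 |
          (zE + ((t * wE : ℝ) : ℂ)).arg ≤ (zA + ((t * wA : ℝ) : ℂ)).arg} = Set.Icc a b ∧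
        (a = 0 ∨ b = 1) := by
  intro hne
  -- imaginary parts are constant in t
  have himA : ∀ t : ℝ, (zA + ((t * wA : ℝ) : ℂ)).im = zA.im := by
    intro t; simp
  have himE : ∀ t : ℝ, (zE + ((t * wE : ℝ) : ℂ)).im = zE.im := by
    intro t; simp
  have hreA : ∀ t : ℝ, (zA + ((t * wA : ℝ) : ℂ)).re = zA.re + t * wA := by
    intro t; simp
  have hreE : ∀ t : ℝ, (zE + ((t * wE : ℝ) : ℂ)).re = zE.re + t * wE := by
    intro t; simp
  have h0 : (0 : ℝ) ∈ Set.Icc (0 : ℝ) 1 := ⟨le_refl 0, zero_le_one⟩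
  rcases hA 0 h0 with hA0 | hA0
  case inr =>
    -- zA.im = 0 : arg of A-charge is π everywhere, so the set is [0,1]
    have hAim : zA.im = 0 := by rw [← himA 0]; exact hA0.1
    refine ⟨0, 1, le_refl 0, zero_le_one, le_refl 1, ?_, Or.inl rfl⟩
    ext t
    simp only [Set.mem_setOf_eq, Set.mem_Icc]
    constructor
    · rintro ⟨h1, _⟩; exact h1
    · intro ht
      refine ⟨ht, ?_⟩
      have hAre : (zA + ((t * wA : ℝ) : ℂ)).re < 0 := by
        rcases hA t ht with h | h
        · rw [himA t, hAim] at h; linarith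
        · exact h.2
      have : (zA + ((t * wA : ℝ) : ℂ)).arg = Real.pi :=
        arg_eq_pi_iff.mpr ⟨hAre, by rw [himA t, hAim]⟩
      rw [this]
      exact arg_le_pi _
  case inl =>
  have hAim : 0 < zA.im := by rw [← himA 0]; exact hA0
  rcases hE 0 h0 with hE0 | hE0
  case inr =>
    -- zE.im = 0 : arg of E-charge is π, arg of A-charge < π, so the set is empty
    exfalso
    obtain ⟨t, ⟨ht, harg⟩⟩ := hne
    have hEre : (zE + ((t * wE : ℝ) : ℂ)).re < 0 := by
      rcases hE t ht with h | h
      · rw [himE t, ← himE 0] at h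
        rw [hE0.1] at h; linarith
      · exact h.2
    have hEim : (zE + ((t * wE : ℝ) : ℂ)).im = 0 := by
      rw [himE t, ← himE 0]; exact hE0.1
    have hEpi : (zE + ((t * wE : ℝ) : ℂ)).arg = Real.pi := arg_eq_pi_iff.mpr ⟨hEre, hEim⟩
    have hAlt : (zA + ((t * wA : ℝ) : ℂ)).arg < Real.pi := by
      apply arg_lt_pi_iff.mpr
      right
      rw [himA t]
      exact ne_of_gt hAim
    rw [hEpi] at harg
    linarith
  case inl =>
  have hEim : 0 < zE.im := by rw [← himE 0]; exact hE0
  -- both imaginary parts positive: the condition is linear in t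
  set c : ℝ := zE.re * zA.im - zA.re * zE.im with hc
  set d : ℝ := wE * zA.im - wA * zE.im with hd
  have hset : {t ∈ Set.Icc (0 : ℝ) 1 |
      (zE + ((t * wE : ℝ) : ℂ)).arg ≤ (zA + ((t * wA : ℝ) : ℂ)).arg} =
      {t ∈ Set.Icc (0 : ℝ) 1 | 0 ≤ c + t * d} := by
    ext t
    simp only [Set.mem_setOf_eq, Set.mem_Icc]
    constructor
    · rintro ⟨ht, harg⟩
      refine ⟨ht, ?_⟩
      have hx : 0 < (zE + ((t * wE : ℝ) : ℂ)).im := by rw [himE t]; exact hEim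
      have hy : 0 < (zA + ((t * wA : ℝ) : ℂ)).im := by rw [himA t]; exact hAim
      have := (arg_le_arg_iff_aux hx hy).mp harg
      rw [hreA t, hreE t, himA t, himE t] at this
      nlinarith
    · rintro ⟨ht, hlin⟩
      refine ⟨ht, ?_⟩
      have hx : 0 < (zE + ((t * wE : ℝ) : ℂ)).im := by rw [himE t]; exact hEim
      have hy : 0 < (zA + ((t * wA : ℝ) : ℂ)).im := by rw [himA t]; exact hAim
      apply (arg_le_arg_iff_aux hx hy).mpr
      rw [hreA t, hreE t, himA t, himE t]
      nlinarith
  rw [hset] at hne ⊢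
  exact linear_interval c d hne
end

section
/- Let Q be a quadratic form on a finite-dimensional real vector space Λ with null space N of dimension 1 (i.e., Q is degenerate with one-dimensional radical). Then there exists a real vector space Λ̄ ⊇ Λ with dim Λ̄ = dim Λ + 1 and a non-degenerate quadratic form Q̄ on Λ̄ extending Q, such that every ℝ-linear map Z : Λ → ℂ whose kernel is negative definite for Q extends to an ℝ-linear map Z̄ : Λ̄ → ℂ whose kernel is negative definite for Q̄. -/
/-!
Pick `n` spanning the radical and a functional `f` with `f n = 1`, and put
`Q̄ (v, t) = Q v + t f(v)` on `Λ × ℝ`: the new coordinate pairs hyperbolically with `n`, which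
kills the radical. Given `Z`, the form `Q + f` is bounded above by some `M` on `ker Z`, since
`Q` is negative definite there. Extend `Z` by `Z̄ (0, 1) = (M + 1) Z(n)`. A kernel vector of `Z̄`
with `t ≠ 0` rescales to `(u, 1)`, and `k = u + (M + 1) n` lies in `ker Z`; as `n` is radical,
`Q̄ (u, 1) = Q k + f k - (M + 1) ≤ -1`.
-/

namespace QuadraticMap

section CommRing

variable {R M : Type*} [CommRing R] [AddCommGroup M] [Module R M]

def hyperbolicExtension (Q : QuadraticMap R M R) (f : Module.Dual R M) :
    QuadraticMap R (M × R) R :=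
  Q.comp (LinearMap.fst R M R) + linMulLin (LinearMap.snd R M R) (f ∘ₗ LinearMap.fst R M R)

variable (Q : QuadraticMap R M R) (f : Module.Dual R M)

@[simp]
theorem hyperbolicExtension_apply (x : M × R) :
    Q.hyperbolicExtension f x = Q x.1 + x.2 * f x.1 := by
  simp [hyperbolicExtension]

theorem polar_hyperbolicExtension (x y : M × R) :
    polar (Q.hyperbolicExtension f) x y = polar Q x.1 y.1 + x.2 * f y.1 + y.2 * f x.1 := by
  simp only [polar, hyperbolicExtension_apply, Prod.fst_add, Prod.snd_add, map_add]
  ring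

variable {Q f}

theorem nondegenerate_polarBilin_hyperbolicExtension {n : M}
    (hrad : LinearMap.ker Q.polarBilin ≤ R ∙ n) (hn : n ∈ LinearMap.ker Q.polarBilin)
    (hfn : f n = 1) : (Q.hyperbolicExtension f).polarBilin.Nondegenerate := by
  refine (LinearMap.IsRefl.nondegenerate_iff_separatingLeft
    fun x y => (polar_comm _ y x).trans).mpr fun x hx => ?_
  simp only [polarBilin_apply_apply, polar_hyperbolicExtension] at hx
  have hn' : ∀ y, polar Q n y = 0 := fun y => LinearMap.congr_fun hn y
  have ht : x.2 = 0 := by simpa [polar_comm Q x.1, hn', hfn] using hx (n, 0)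
  have hx_rad : x.1 ∈ LinearMap.ker Q.polarBilin :=
    LinearMap.ext fun y => by simpa [ht] using hx (y, 0)
  obtain ⟨c, hc⟩ := Submodule.mem_span_singleton.mp (hrad hx_rad)
  have hc0 : c = 0 := by simpa [← hc, hfn] using hx (0, 1)
  ext <;> simp [← hc, hc0, ht]

end CommRing

section Ordered

variable {K V E : Type*} [Field K] [LinearOrder K] [IsStrictOrderedRing K]
  [AddCommGroup V] [Module K V] [AddCommGroup E] [Module K E]

/-- Completing the square: with `polar Q · w = f`, we get `Q x + f x = Q (x + w) - Q w ≤ -Q w`. -/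
theorem exists_forall_add_le_of_neg [FiniteDimensional K V] (Q : QuadraticForm K V)
    (hQ : ∀ x, x ≠ 0 → Q x < 0) (f : Module.Dual K V) : ∃ M, ∀ x, Q x + f x ≤ M := by
  have hnd : Q.polarBilin.Nondegenerate := by
    rw [nondegenerate_polar_iff, nondegenerate_iff_radical_eq_bot, eq_bot_iff]
    intro x hx
    by_contra hx0
    exact (hQ x hx0).ne (mem_radical_iff'.mp hx).1
  set w := (LinearMap.BilinForm.toDual Q.polarBilin hnd).symm f
  have hw : ∀ x, polar Q x w = f x := fun x => by
    rw [polar_comm, ← polarBilin_apply_apply]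
    exact LinearMap.BilinForm.apply_toDual_symm_apply f x
  refine ⟨-Q w, fun x => ?_⟩
  have hxw : Q (x + w) ≤ 0 := by
    rcases eq_or_ne (x + w) 0 with h | h
    · simp [h]
    · exact (hQ _ h).le
  rw [← hw, polar] at *
  linarith

variable {Q : QuadraticForm K V} {f : Module.Dual K V} {Z : V →ₗ[K] E} {n : V} {M c : K}

theorem hyperbolicExtension_apply_one_neg (hn : n ∈ Q.radical) (hfn : f n = 1)
    (hM : ∀ k ∈ LinearMap.ker Z, Q k + f k ≤ M) (hc : M < c) {u : V}
    (hu : (u, 1) ∈ LinearMap.ker (Z.coprod (LinearMap.toSpanSingleton K E (c • Z n)))) :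
    Q.hyperbolicExtension f (u, 1) < 0 := by
  have hk : u + c • n ∈ LinearMap.ker Z := by simpa using hu
  have hQk : Q (u + c • n) = Q u := by
    rw [add_comm]
    exact (mem_radical_iff'.mp (Q.radical.smul_mem c hn)).2 u
  have hMk := hM _ hk
  simp only [hyperbolicExtension_apply, one_mul, map_add, map_smul, hfn, hQk,
    smul_eq_mul, mul_one] at hMk ⊢
  linarith

theorem hyperbolicExtension_neg_of_mem_ker (hn : n ∈ Q.radical) (hfn : f n = 1)
    (hZ : ∀ v ∈ LinearMap.ker Z, v ≠ 0 → Q v < 0)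
    (hM : ∀ k ∈ LinearMap.ker Z, Q k + f k ≤ M) (hc : M < c) :
    ∀ x ∈ LinearMap.ker (Z.coprod (LinearMap.toSpanSingleton K E (c • Z n))), x ≠ 0 →
      Q.hyperbolicExtension f x < 0 := by
  rintro ⟨v, t⟩ hx hx0
  rcases eq_or_ne t 0 with rfl | ht
  · have hv : v ≠ 0 := by rintro rfl; exact hx0 rfl
    simpa using hZ v (by simpa using hx) hv
  · have hscale : (v, t) = t • (t⁻¹ • v, (1 : K)) := by
      simp [smul_smul, mul_inv_cancel₀ ht]
    have hu := Submodule.smul_mem _ t⁻¹ hx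
    rw [hscale, smul_smul, inv_mul_cancel₀ ht, one_smul] at hu
    rw [hscale, QuadraticMap.map_smul, smul_eq_mul]
    exact mul_neg_of_pos_of_neg (mul_self_pos.mpr ht)
      (hyperbolicExtension_apply_one_neg hn hfn hM hc hu)

end Ordered

end QuadraticMap

open QuadraticMap in
/-- Let `Q` be a quadratic form on a finite-dimensional real vector space
`Λ` whose radical (the kernel of the associated bilinear form) is one-dimensional.  Then
there is a real vector space `Λ̄ ⊇ Λ` of dimension `dim Λ + 1` (realized as `Λ × ℝ` with
`Λ` embedded as `v ↦ (v, 0)`) and a non-degenerate quadratic form `Q̄` on `Λ̄` extending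
`Q`, such that every `ℝ`-linear `Z : Λ → ℂ` whose kernel is negative definite for `Q`
extends to an `ℝ`-linear `Z̄ : Λ̄ → ℂ` whose kernel is negative definite for `Q̄`. -/
theorem stmt6 {Λ : Type*} [AddCommGroup Λ] [Module ℝ Λ] [FiniteDimensional ℝ Λ]
    (Q : QuadraticForm ℝ Λ)
    (hrad : Module.finrank ℝ (LinearMap.ker Q.polarBilin) = 1) :
    ∃ Qbar : QuadraticForm ℝ (Λ × ℝ),
      (∀ v : Λ, Qbar (v, 0) = Q v) ∧
      Qbar.polarBilin.Nondegenerate ∧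
      ∀ Z : Λ →ₗ[ℝ] ℂ, (∀ v ∈ LinearMap.ker Z, v ≠ 0 → Q v < 0) →
        ∃ Zbar : (Λ × ℝ) →ₗ[ℝ] ℂ, (∀ v : Λ, Zbar (v, 0) = Z v) ∧
          ∀ x ∈ LinearMap.ker Zbar, x ≠ 0 → Qbar x < 0 := by
  obtain ⟨n, hn, hn0⟩ := Submodule.exists_mem_ne_zero_of_ne_bot
    (p := LinearMap.ker Q.polarBilin) fun h => by
      rw [h, finrank_bot] at hrad
      exact zero_ne_one hrad
  have hspan := eq_span_singleton_of_mem_of_finrank_eq_one hrad hn hn0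
  obtain ⟨f, hfn⟩ := Module.Projective.exists_dual_eq_one ℝ hn0
  refine ⟨Q.hyperbolicExtension f, fun v => by simp,
    nondegenerate_polarBilin_hyperbolicExtension hspan.le hn hfn, fun Z hZ => ?_⟩
  obtain ⟨M, hM⟩ := exists_forall_add_le_of_neg (Q.comp (LinearMap.ker Z).subtype)
    (fun k hk => hZ k k.2 (by simpa using hk)) (f ∘ₗ (LinearMap.ker Z).subtype)
  refine ⟨Z.coprod (LinearMap.toSpanSingleton ℝ ℂ ((M + 1) • Z n)), fun v => by simp,
    hyperbolicExtension_neg_of_mem_ker (radical_eq_ker_polarBilin.ge hn) hfn hZ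
      (fun k hk => hM ⟨k, hk⟩) (lt_add_one M)⟩
end

section
/- Let Q be a non-degenerate quadratic form of signature (p, n−p) with p ∈ {0, 1} on an n-dimensional real vector space Λ, and define Q̄ on Λ̄ = Λ ⊕ ℝ by Q̄(v, α) = Q(v) + α². Then any ℝ-linear map Z : Λ → ℂ whose kernel is Q-negative definite extends to an ℝ-linear map Z̄ : Λ̄ → ℂ whose kernel is Q̄-negative definite. -/
/-!
Let `K = ker Z`. If `Z` is not onto `ℂ`, take `z ∉ range Z`; then `Z v + α z = 0` forces `α = 0`
and `v ∈ K`. If `Z` is onto, `K` is anisotropic, so `Λ = K ⊕ K^⊥` and `K^⊥` has dimension `2`,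
which exceeds the positive index `p ≤ 1`. Hence `K^⊥` contains a vector `w ≠ 0` with `Q w ≤ 0`,
and if `Q w = 0` nondegeneracy gives `y ∈ K^⊥` with `polar Q w y ≠ 0`, so that `Q (y + t w) < 0`
for a suitable `t`. Rescaling a negative vector `u ∈ K^⊥` we get `Q u < -1`, and `z = Z u` works:
every `v` with `Z v = z` is `u` plus an element of `K` orthogonal to `u`, so `Q v ≤ Q u < -1`,
and `Z v + α z = 0` with `α ≠ 0` gives `Q v = α² Q (-v / α) < -α²`.
-/

open Module
open LinearMap (BilinForm)

namespace QuadraticMap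

section Ring

variable {R M N : Type*} [CommRing R] [AddCommGroup M] [Module R M] [AddCommGroup N] [Module R N]

theorem polarBilin_isRefl (Q : QuadraticMap R M N) : Q.polarBilin.IsRefl := fun x y h => by
  rwa [polarBilin_apply_apply, polar_comm, ← polarBilin_apply_apply]

end Ring

variable {V : Type*} [AddCommGroup V] [Module ℝ V] {Q : QuadraticForm ℝ V}

theorem exists_smul_lt {u : V} (hu : Q u < 0) (r : ℝ) : ∃ c : ℝ, Q (c • u) < r := by
  refine ⟨(|r| + 1) / -Q u + 1, ?_⟩
  have hc : (|r| + 1) / -Q u * -Q u = |r| + 1 := div_mul_cancel₀ _ (by linarith)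
  have hc0 : 0 ≤ (|r| + 1) / -Q u := div_nonneg (by positivity) (by linarith)
  rw [QuadraticMap.map_smul, smul_eq_mul]
  nlinarith [mul_nonneg (mul_nonneg hc0 hc0) (neg_nonneg.2 hu.le), neg_abs_le r]

theorem exists_add_smul_lt_zero_of_isotropic {w y : V} (hw : Q w = 0) (hwy : polar Q w y ≠ 0) :
    ∃ t : ℝ, Q (y + t • w) < 0 := by
  refine ⟨-(Q y + 1) / polar Q w y, ?_⟩
  rw [QuadraticMap.map_add Q, QuadraticMap.map_smul, polar_smul_right, polar_comm Q y w, hw,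
    smul_eq_mul, smul_eq_mul, mul_zero, add_zero, div_mul_cancel₀ _ hwy]
  linarith

theorem isCompl_orthogonal_polarBilin [FiniteDimensional ℝ V] {K : Submodule ℝ V}
    (hK : ∀ v ∈ K, Q v = 0 → v = 0) : IsCompl K (BilinForm.orthogonal Q.polarBilin K) := by
  refine (BilinForm.isCompl_orthogonal_iff_disjoint Q.polarBilin_isRefl).2 ?_
  refine Submodule.disjoint_def.2 fun v hvK hv => hK v hvK ?_
  have hvv : polar Q v v = 0 := hv v hvK
  rw [polar_self, two_nsmul] at hvv
  linarith

theorem exists_mem_orthogonal_lt_zero [FiniteDimensional ℝ V] (hnd : Q.polarBilin.Nondegenerate)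
    {p : ℕ} (hpos : ∀ W : Submodule ℝ V, (∀ w ∈ W, w ≠ 0 → 0 < Q w) → finrank ℝ W ≤ p)
    {K : Submodule ℝ V} (hK : ∀ v ∈ K, Q v = 0 → v = 0)
    (hdim : p < finrank ℝ (BilinForm.orthogonal Q.polarBilin K)) :
    ∃ u ∈ BilinForm.orthogonal Q.polarBilin K, Q u < 0 := by
  set W := BilinForm.orthogonal Q.polarBilin K
  obtain ⟨w, hwW, hw0, hQw⟩ : ∃ w ∈ W, w ≠ 0 ∧ Q w ≤ 0 := by
    by_contra! h
    exact hdim.not_ge (hpos W h)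
  obtain hneg | hiso := hQw.lt_or_eq
  · exact ⟨w, hwW, hneg⟩
  obtain ⟨x, hx⟩ : ∃ x, polar Q w x ≠ 0 := by
    by_contra! h
    exact hw0 (hnd.1 w h)
  have hxKW : x ∈ K ⊔ W := by
    rw [(isCompl_orthogonal_polarBilin hK).sup_eq_top]
    exact Submodule.mem_top
  obtain ⟨k, hk, y, hyW, rfl⟩ := Submodule.mem_sup.mp hxKW
  have hwk : polar Q w k = 0 := by
    rw [polar_comm]
    exact hwW k hk
  have hwy : polar Q w y ≠ 0 := by rwa [polar_add_right, hwk, zero_add] at hx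
  obtain ⟨t, ht⟩ := exists_add_smul_lt_zero_of_isotropic hiso hwy
  exact ⟨y + t • w, W.add_mem hyW (W.smul_mem t hwW), ht⟩

variable {E : Type*} [AddCommGroup E] [Module ℝ E]

theorem exists_forall_apply_eq_lt_neg_one [FiniteDimensional ℝ V]
    (hnd : Q.polarBilin.Nondegenerate) {p : ℕ}
    (hpos : ∀ W : Submodule ℝ V, (∀ w ∈ W, w ≠ 0 → 0 < Q w) → finrank ℝ W ≤ p)
    (Z : V →ₗ[ℝ] E) (hE : p < finrank ℝ E) (hker : ∀ v ∈ LinearMap.ker Z, v ≠ 0 → Q v < 0) :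
    ∃ z : E, ∀ v, Z v = z → Q v < -1 := by
  by_cases hsurj : Function.Surjective Z
  swap
  · obtain ⟨z, hz⟩ := not_forall.1 hsurj
    exact ⟨z, fun v hv => (hz ⟨v, hv⟩).elim⟩
  set K := LinearMap.ker Z
  have hK : ∀ v ∈ K, Q v = 0 → v = 0 := fun v hv h0 => by
    by_contra hne
    exact (hker v hv hne).ne h0
  have hdim : finrank ℝ (BilinForm.orthogonal Q.polarBilin K) = finrank ℝ E := by
    have hsum := Submodule.finrank_add_eq_of_isCompl (isCompl_orthogonal_polarBilin hK)
    have hrank : finrank ℝ (LinearMap.range Z) + finrank ℝ K = finrank ℝ V :=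
      LinearMap.finrank_range_add_finrank_ker Z
    rw [LinearMap.range_eq_top.2 hsurj, finrank_top] at hrank
    omega
  obtain ⟨u₀, hu₀, hQu₀⟩ := exists_mem_orthogonal_lt_zero hnd hpos hK (hdim ▸ hE)
  obtain ⟨c, hc⟩ := exists_smul_lt hQu₀ (-1)
  refine ⟨Z (c • u₀), fun v hv => ?_⟩
  have hk : v - c • u₀ ∈ K := by simp [K, hv]
  have hperp : polar Q (v - c • u₀) (c • u₀) = 0 :=
    (BilinForm.orthogonal Q.polarBilin K).smul_mem c hu₀ _ hk
  have hQk : Q (v - c • u₀) ≤ 0 := by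
    by_cases h0 : v - c • u₀ = 0
    · simp [h0]
    · exact (hker _ hk h0).le
  calc Q v = Q (v - c • u₀) + Q (c • u₀) := by
        simpa only [sub_add_cancel, hperp, add_zero] using
          QuadraticMap.map_add Q (v - c • u₀) (c • u₀)
    _ < -1 := by linarith

theorem add_sq_lt_zero_of_mem_ker_coprod {Z : V →ₗ[ℝ] E} {z : E}
    (hker : ∀ v ∈ LinearMap.ker Z, v ≠ 0 → Q v < 0) (hz : ∀ v, Z v = z → Q v < -1)
    {x : V × ℝ} (hx : x ∈ LinearMap.ker (Z.coprod (LinearMap.toSpanSingleton ℝ E z)))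
    (hx0 : x ≠ 0) : Q x.1 + x.2 ^ 2 < 0 := by
  obtain ⟨v, α⟩ := x
  simp only [LinearMap.mem_ker, LinearMap.coprod_apply, LinearMap.toSpanSingleton_apply] at hx
  by_cases hα : α = 0
  · subst hα
    have hv0 : v ≠ 0 := fun h => hx0 (by simp [h])
    simpa using hker v (by simpa using hx) hv0
  · have hZ : Z ((-α⁻¹) • v) = z := by
      rw [map_smul, eq_neg_of_add_eq_zero_left hx, smul_neg, neg_smul, neg_neg, smul_smul,
        inv_mul_cancel₀ hα, one_smul]
    have hlt := hz _ hZ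
    rw [QuadraticMap.map_smul, smul_eq_mul, neg_mul_neg, ← mul_inv, ← pow_two,
      inv_mul_eq_div, div_lt_iff₀ (by positivity)] at hlt
    linarith

end QuadraticMap

theorem stmt7_general {Λ : Type*} [AddCommGroup Λ] [Module ℝ Λ] [FiniteDimensional ℝ Λ]
    (Q : QuadraticForm ℝ Λ) (p : ℕ) (hp : p = 0 ∨ p = 1)
    (hnd : Q.polarBilin.Nondegenerate)
    (hposmax : ∀ W : Submodule ℝ Λ, (∀ w ∈ W, w ≠ 0 → 0 < Q w) →
      Module.finrank ℝ W ≤ p)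
    (Qbar : QuadraticForm ℝ (Λ × ℝ))
    (hQbar : ∀ (v : Λ) (α : ℝ), Qbar (v, α) = Q v + α ^ 2)
    (Z : Λ →ₗ[ℝ] ℂ) (hker : ∀ v ∈ LinearMap.ker Z, v ≠ 0 → Q v < 0) :
    ∃ Zbar : (Λ × ℝ) →ₗ[ℝ] ℂ, (∀ v : Λ, Zbar (v, 0) = Z v) ∧
      ∀ x ∈ LinearMap.ker Zbar, x ≠ 0 → Qbar x < 0 := by
  have hp2 : p < finrank ℝ ℂ := by
    rw [Complex.finrank_real_complex]
    omega
  obtain ⟨z, hz⟩ := QuadraticMap.exists_forall_apply_eq_lt_neg_one hnd hposmax Z hp2 hker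
  refine ⟨Z.coprod (LinearMap.toSpanSingleton ℝ ℂ z), fun v => by simp, fun ⟨v, α⟩ hx hx0 => ?_⟩
  rw [hQbar]
  exact QuadraticMap.add_sq_lt_zero_of_mem_ker_coprod hker hz hx hx0

/-- Let `Q` be a non-degenerate quadratic form of signature `(p, n−p)` with
`p ∈ {0, 1}` on an `n`-dimensional real vector space `Λ` (so a maximal positive definite
subspace has dimension `p`), and define `Q̄` on `Λ̄ = Λ ⊕ ℝ` by `Q̄(v, α) = Q(v) + α²`.
Then any `ℝ`-linear map `Z : Λ → ℂ` whose kernel is `Q`-negative definite extends to an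
`ℝ`-linear map `Z̄ : Λ̄ → ℂ` whose kernel is `Q̄`-negative definite. -/
theorem stmt7 {Λ : Type*} [AddCommGroup Λ] [Module ℝ Λ] [FiniteDimensional ℝ Λ]
    (Q : QuadraticForm ℝ Λ) (p : ℕ) (hp : p = 0 ∨ p = 1)
    (hnd : Q.polarBilin.Nondegenerate)
    (hposmax : ∀ W : Submodule ℝ Λ, (∀ w ∈ W, w ≠ 0 → 0 < Q w) →
      Module.finrank ℝ W ≤ p)
    (hposex : ∃ W : Submodule ℝ Λ, Module.finrank ℝ W = p ∧ ∀ w ∈ W, w ≠ 0 → 0 < Q w)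
    (Qbar : QuadraticForm ℝ (Λ × ℝ))
    (hQbar : ∀ (v : Λ) (α : ℝ), Qbar (v, α) = Q v + α ^ 2)
    (Z : Λ →ₗ[ℝ] ℂ) (hker : ∀ v ∈ LinearMap.ker Z, v ≠ 0 → Q v < 0) :
    ∃ Zbar : (Λ × ℝ) →ₗ[ℝ] ℂ, (∀ v : Λ, Zbar (v, 0) = Z v) ∧
      ∀ x ∈ LinearMap.ker Zbar, x ≠ 0 → Qbar x < 0 :=
  stmt7_general Q p hp hnd hposmax Qbar hQbar Z hker
end

section
/- Let Λ be a finite-dimensional real vector space with a symmetric bilinear form (·,·), Z : Λ → ℂ ℝ-linear with kernel K on which the form is negative definite, p : Λ → K the orthogonal projection, and suppose (v,v) = |Z(v)|² − ‖p(v)‖² for all v, where ‖k‖² = −(k,k) for k ∈ K. Let Δ ⊂ Λ be a set of lattice points (contained in a full-rank lattice) with (δ,δ) = −2 and Z(δ) ≠ 0 for all δ ∈ Δ. Then inf{|Z(δ)| : δ ∈ Δ} > 0. -/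
/-!
The quadratic form `Q v = 2 |Z v|² - (v, v)`, which equals `|Z v|² + ‖p v‖²`, is positive
definite, so in coordinates it dominates a multiple of the squared Euclidean norm and has only
finitely many lattice points in each sublevel set. Every `δ ∈ Δ` with `|Z δ| ≤ 1` satisfies
`Q δ = 2 |Z δ|² + 2 ≤ 4`, so only finitely many `δ` have `|Z δ| ≤ 1`, and the infimum is at
least the minimum of `1` and of `|Z δ|` over these.
-/

open Bornology Metric Set Submodule

section PosDef

variable {E : Type*} [NormedAddCommGroup E] [NormedSpace ℝ E] [FiniteDimensional ℝ E]

theorem QuadraticMap.continuous_of_finiteDimensional (Q : QuadraticForm ℝ E) : Continuous Q := by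
  have : IsModuleTopology ℝ E := isModuleTopologyOfFiniteDimensional
  have := (IsModuleTopology.continuous_bilinear_of_finite_left
    (QuadraticMap.associated (R := ℝ) Q)).comp (continuous_id.prodMk continuous_id)
  simpa [Function.comp_def, QuadraticMap.associated_eq_self_apply] using this

theorem QuadraticMap.PosDef.exists_pos_mul_norm_sq_le {Q : QuadraticForm ℝ E} (hQ : Q.PosDef) :
    ∃ c > 0, ∀ x, c * ‖x‖ ^ 2 ≤ Q x := by
  rcases subsingleton_or_nontrivial E with hE | hE
  · exact ⟨1, one_pos, fun x => by simp [Subsingleton.elim x 0]⟩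
  obtain ⟨x₀, hx₀, hmin⟩ := (isCompact_sphere (0 : E) 1).exists_isMinOn
    (NormedSpace.sphere_nonempty.2 zero_le_one) Q.continuous_of_finiteDimensional.continuousOn
  refine ⟨Q x₀, hQ _ (ne_zero_of_mem_unit_sphere ⟨x₀, hx₀⟩), fun x => ?_⟩
  rcases eq_or_ne x 0 with rfl | hx
  · simp
  have hu : ‖x‖⁻¹ • x ∈ sphere (0 : E) 1 := by
    simpa using norm_smul_inv_norm (𝕜 := ℝ) hx
  calc Q x₀ * ‖x‖ ^ 2 ≤ Q (‖x‖⁻¹ • x) * ‖x‖ ^ 2 := by gcongr; exact hmin hu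
    _ = Q x := by
      rw [QuadraticMap.map_smul, smul_eq_mul]
      field_simp

theorem QuadraticMap.PosDef.isBounded_setOf_le {Q : QuadraticForm ℝ E} (hQ : Q.PosDef) (r : ℝ) :
    IsBounded {x | Q x ≤ r} := by
  obtain ⟨c, hc, hle⟩ := hQ.exists_pos_mul_norm_sq_le
  refine (isBounded_closedBall (x := 0) (r := √(r / c))).subset fun x hx => ?_
  rw [mem_closedBall_zero_iff]
  exact Real.le_sqrt_of_sq_le ((le_div_iff₀' hc).2 ((hle x).trans hx))

end PosDef

theorem QuadraticMap.PosDef.finite_setOf_mem_span_int_le {Λ : Type*} [AddCommGroup Λ]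
    [Module ℝ Λ] {ι : Type*} [Finite ι] (b : Module.Basis ι ℝ Λ) {Q : QuadraticForm ℝ Λ}
    (hQ : Q.PosDef) (r : ℝ) :
    {v | v ∈ span ℤ (range b) ∧ Q v ≤ r}.Finite := by
  cases nonempty_fintype ι
  let e := b.equivFun
  have hQe : (Q.comp e.symm.toLinearMap).PosDef := fun x hx => hQ _ (by simpa using hx)
  refine ((ZSpan.setFinite_inter (Pi.basisFun ℝ ι) (hQe.isBounded_setOf_le r)).preimage
    e.injective.injOn).subset ?_
  rintro v ⟨hv, hQv⟩
  refine ⟨by simpa using hQv, ?_⟩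
  rw [SetLike.mem_coe, (Pi.basisFun ℝ ι).mem_span_iff_repr_mem ℤ]
  simpa [e] using (b.mem_span_iff_repr_mem ℤ v).1 hv

theorem exists_pos_le_of_finite_setOf_le_one {α : Type*} {S : Set α} {g : α → ℝ}
    (hpos : ∀ x ∈ S, 0 < g x) (hfin : {x ∈ S | g x ≤ 1}.Finite) :
    ∃ C, 0 < C ∧ ∀ x ∈ S, C ≤ g x := by
  have hev : ∀ᶠ C in nhdsWithin (0 : ℝ) (Ioi 0), ∀ x ∈ {x ∈ S | g x ≤ 1}, C ≤ g x :=
    hfin.eventually_all.2 fun x hx => nhdsWithin_le_nhds (eventually_le_nhds (hpos x hx.1))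
  obtain ⟨C, hle, hC⟩ := (hev.and self_mem_nhdsWithin).exists
  refine ⟨min C 1, lt_min hC one_pos, fun x hx => ?_⟩
  by_cases h : g x ≤ 1
  · exact (min_le_left _ _).trans (hle x ⟨hx, h⟩)
  · exact (min_le_right _ _).trans (not_le.1 h).le

section CentralCharge

variable {Λ : Type*} [AddCommGroup Λ] [Module ℝ Λ]

noncomputable def centralChargeForm (B : LinearMap.BilinForm ℝ Λ) (Z : Λ →ₗ[ℝ] ℂ) :
    QuadraticForm ℝ Λ :=
  LinearMap.BilinMap.toQuadraticMap (2 • (innerₗ ℂ).compl₁₂ Z Z - B)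

theorem centralChargeForm_apply (B : LinearMap.BilinForm ℝ Λ) (Z : Λ →ₗ[ℝ] ℂ) (v : Λ) :
    centralChargeForm B Z v = 2 * ‖Z v‖ ^ 2 - B v v := by
  simp [centralChargeForm]

theorem posDef_centralChargeForm {B : LinearMap.BilinForm ℝ Λ} {Z : Λ →ₗ[ℝ] ℂ}
    (hneg : ∀ v ∈ LinearMap.ker Z, v ≠ 0 → B v v < 0) {p : Λ →ₗ[ℝ] Λ}
    (hpK : ∀ v, Z (p v) = 0) (hnorm : ∀ v, B v v = ‖Z v‖ ^ 2 + B (p v) (p v)) :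
    (centralChargeForm B Z).PosDef := by
  intro v hv
  rw [centralChargeForm_apply]
  by_cases hZ : Z v = 0
  · simpa [hZ] using hneg v hZ hv
  · have hp : B (p v) (p v) ≤ 0 := by
      by_cases hp0 : p v = 0
      · simp [hp0]
      · exact (hneg _ (hpK v) hp0).le
    have := norm_pos_iff.2 hZ
    nlinarith [hnorm v]

end CentralCharge

theorem stmt8_general {Λ : Type*} [AddCommGroup Λ] [Module ℝ Λ]
    (B : LinearMap.BilinForm ℝ Λ)
    (Z : Λ →ₗ[ℝ] ℂ)
    (hneg : ∀ v ∈ LinearMap.ker Z, v ≠ 0 → B v v < 0)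
    (p : Λ →ₗ[ℝ] Λ)
    (hpK : ∀ v : Λ, Z (p v) = 0)
    (hnorm : ∀ v : Λ, B v v = ‖Z v‖ ^ 2 + B (p v) (p v))
    {ι : Type*} [Fintype ι] (b : Module.Basis ι ℝ Λ)
    (Δ : Set Λ)
    (hΔ : ∀ δ ∈ Δ, δ ∈ Submodule.span ℤ (Set.range b) ∧ B δ δ = -2 ∧ Z δ ≠ 0) :
    ∃ C : ℝ, 0 < C ∧ ∀ δ ∈ Δ, C ≤ ‖Z δ‖ := by
  refine exists_pos_le_of_finite_setOf_le_one (fun δ hδ => norm_pos_iff.2 (hΔ δ hδ).2.2) ?_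
  refine ((posDef_centralChargeForm hneg hpK hnorm).finite_setOf_mem_span_int_le b 4).subset ?_
  rintro δ ⟨hδ, hZ⟩
  obtain ⟨hspan, hB, -⟩ := hΔ δ hδ
  refine ⟨hspan, ?_⟩
  rw [centralChargeForm_apply, hB]
  nlinarith [norm_nonneg (Z δ)]

/-- Let `Λ` be a finite-dimensional real vector space with a symmetric
bilinear form `(·,·)`, `Z : Λ → ℂ` an `ℝ`-linear map with kernel `K` on which the form is
negative definite, `p : Λ → K` the orthogonal projection (so `Z ∘ p = 0` and `p` is the
identity on `K`), and suppose `(v,v) = |Z(v)|² − ‖p(v)‖²` for all `v`, where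
`‖k‖² = −(k,k)` on `K` (i.e. `(v,v) = |Z(v)|² + (p v, p v)`).  Let `Δ ⊆ Λ` consist of points
of a full lattice (the `ℤ`-span of an `ℝ`-basis) with `(δ,δ) = −2` and `Z(δ) ≠ 0` for all
`δ ∈ Δ`.  Then `inf{|Z(δ)| : δ ∈ Δ} > 0`. -/
theorem stmt8 {Λ : Type*} [AddCommGroup Λ] [Module ℝ Λ] [FiniteDimensional ℝ Λ]
    (B : LinearMap.BilinForm ℝ Λ) (hsymm : ∀ x y, B x y = B y x)
    (Z : Λ →ₗ[ℝ] ℂ)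
    (hneg : ∀ v ∈ LinearMap.ker Z, v ≠ 0 → B v v < 0)
    (p : Λ →ₗ[ℝ] Λ)
    (hpK : ∀ v : Λ, Z (p v) = 0)
    (hpid : ∀ v ∈ LinearMap.ker Z, p v = v)
    (hnorm : ∀ v : Λ, B v v = ‖Z v‖ ^ 2 + B (p v) (p v))
    {ι : Type*} [Fintype ι] (b : Module.Basis ι ℝ Λ)
    (Δ : Set Λ)
    (hΔ : ∀ δ ∈ Δ, δ ∈ Submodule.span ℤ (Set.range b) ∧ B δ δ = -2 ∧ Z δ ≠ 0) :
    ∃ C : ℝ, 0 < C ∧ ∀ δ ∈ Δ, C ≤ ‖Z δ‖ :=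
  stmt8_general B Z hneg p hpK hnorm b Δ hΔ
end

section
/- Let P ⊂ ℂ be the HN polygon (a convex set containing the path from 0 to z(E) on its left boundary) and suppose A ⊆ E with HN^Z(A) ⊆ HN^Z(E). Define the mass m^Z(F) as the Euclidean length of the left boundary of HN^Z(F) from 0 to Z(F). Then m^Z(A) − Re Z(A) ≤ m^Z(E) − Re Z(E). -/
/-!
For a vector `d` with `0 ≤ Im d` one has the Crofton-type formula
`‖d‖ - Re d = ∫₀^π max 0 (Im (d e^{-iφ})) dφ`.  Summing over the edges of a path, `m^Z - Re Z`
becomes the integral over `φ ∈ [0, π]` of the ascent of the path in the direction `i e^{iφ}`.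
For a convex path this ascent is the support function of its vertices, attained at the vertex
where the edge phases cross `φ`; every point of `HN^Z(A)` lies below some vertex of the `E`-path in
that direction, because it lies to the right of the two edges meeting there.  So the integrand
for `A` is pointwise at most the one for `E`.
-/

open Real Finset

namespace HNPolygon

/-- Bridgeland's semi-closed upper half plane `ℍ = {r e^{iπt} | r > 0, 0 < t ≤ 1}`. -/
def semiclosedUpperHalfPlane : Set ℂ := {z | 0 < z.im ∨ z.im = 0 ∧ z.re < 0}

local notation "ℍ" => semiclosedUpperHalfPlane

lemma ne_zero_of_mem_semiclosedUpperHalfPlane {z : ℂ} (hz : z ∈ ℍ) : z ≠ 0 := by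
  rintro rfl
  rcases hz with h | h <;> simp at h

lemma arg_pos_of_mem_semiclosedUpperHalfPlane {z : ℂ} (hz : z ∈ ℍ) : 0 < z.arg := by
  rcases hz with h | ⟨h, hre⟩
  · refine (Complex.arg_nonneg_iff.2 h.le).lt_of_ne fun h0 => ?_
    exact h.ne' (Complex.arg_eq_zero_iff.1 h0.symm).2
  · rw [Complex.arg_eq_pi_iff.2 ⟨hre, h⟩]
    exact pi_pos

lemma im_nonneg_of_mem_insert_zero {z : ℂ} (hz : z ∈ insert 0 ℍ) : 0 ≤ z.im := by
  rcases hz with rfl | h | h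
  · simp
  · exact h.le
  · exact h.1.ge

lemma add_mem_insert_zero {z w : ℂ} (hz : z ∈ insert 0 ℍ) (hw : w ∈ insert 0 ℍ) :
    z + w ∈ insert 0 ℍ := by
  rcases hz with rfl | hz
  · simpa using hw
  rcases hw with rfl | hw
  · simpa using Or.inr hz
  right
  simp only [semiclosedUpperHalfPlane, Set.mem_ofPred_eq, Complex.add_im, Complex.add_re] at hz hw ⊢
  rcases hz with hz | hz <;> rcases hw with hw | hw
  · exact Or.inl (by linarith)
  · exact Or.inl (by linarith)
  · exact Or.inl (by linarith)
  · exact Or.inr ⟨by linarith, by linarith⟩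

/-- `Im (z e^{-iφ})`: the component of `z` along the direction `i e^{iφ}`. -/
noncomputable def rotIm (z : ℂ) (φ : ℝ) : ℝ := z.im * cos φ - z.re * sin φ

lemma rotIm_sub (z w : ℂ) (φ : ℝ) : rotIm (z - w) φ = rotIm z φ - rotIm w φ := by
  simp only [rotIm, Complex.sub_im, Complex.sub_re]
  ring

lemma rotIm_eq_norm_mul_sin (z : ℂ) (φ : ℝ) : rotIm z φ = ‖z‖ * sin (z.arg - φ) := by
  have hcos := Complex.norm_mul_cos_arg z
  have hsin := Complex.norm_mul_sin_arg z
  simp only [rotIm, sin_sub]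
  linear_combination sin φ * hcos - cos φ * hsin

lemma rotIm_arg_self (z : ℂ) : rotIm z z.arg = 0 := by
  simp [rotIm_eq_norm_mul_sin]

lemma norm_mul_rotIm_arg (d u : ℂ) : ‖d‖ * rotIm u d.arg = d.re * u.im - d.im * u.re := by
  have hcos := Complex.norm_mul_cos_arg d
  have hsin := Complex.norm_mul_sin_arg d
  simp only [rotIm]
  linear_combination u.im * hcos - u.re * hsin

lemma rotIm_nonneg_iff {z : ℂ} (hz : z ∈ ℍ) {φ : ℝ} (hφ : φ ∈ Set.Icc 0 π) :
    0 ≤ rotIm z φ ↔ φ ≤ z.arg := by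
  have harg := arg_pos_of_mem_semiclosedUpperHalfPlane hz
  have hπ := Complex.arg_le_pi z
  rw [rotIm_eq_norm_mul_sin,
    mul_nonneg_iff_of_pos_left (norm_pos_iff.2 (ne_zero_of_mem_semiclosedUpperHalfPlane hz))]
  constructor
  · intro hsin
    by_contra! hlt
    linarith [sin_neg_of_neg_of_neg_pi_lt (by linarith) (by linarith [hφ.2] : -π < z.arg - φ)]
  · intro hle
    exact sin_nonneg_of_nonneg_of_le_pi (by linarith) (by linarith [hφ.1])

lemma rotIm_nonpos_of_mem_Icc {u : ℂ} {α β φ : ℝ} (hφ : φ ∈ Set.Icc β α) (hαβ : α - β < π)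
    (hα : rotIm u α ≤ 0) (hβ : rotIm u β ≤ 0) : rotIm u φ ≤ 0 := by
  rcases hφ.1.eq_or_lt with rfl | hβφ
  · exact hβ
  have hid : sin (α - β) * rotIm u φ = sin (α - φ) * rotIm u β + sin (φ - β) * rotIm u α := by
    simp only [rotIm, sin_sub]
    ring
  have hsum : sin (α - β) * rotIm u φ ≤ 0 := by
    rw [hid]
    have h1 := sin_nonneg_of_nonneg_of_le_pi (x := α - φ) (by linarith [hφ.2]) (by linarith)
    have h2 := sin_nonneg_of_nonneg_of_le_pi (x := φ - β) (by linarith) (by linarith [hφ.2])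
    nlinarith [mul_nonpos_of_nonneg_of_nonpos h1 hβ, mul_nonpos_of_nonneg_of_nonpos h2 hα]
  refine nonpos_of_mul_nonpos_left (a := rotIm u φ) ?_ (sin_pos_of_pos_of_lt_pi ?_ hαβ)
  · linarith
  · linarith [hφ.2]

lemma rotIm_nonpos_of_neg_mem {u : ℂ} (hu : -u ∈ insert 0 ℍ) (hπ : rotIm u π ≤ 0) {φ : ℝ}
    (hφ : φ ∈ Set.Icc 0 π) : rotIm u φ ≤ 0 := by
  have him : 0 ≤ u.im := by simpa [rotIm] using hπ
  have hsin := sin_nonneg_of_nonneg_of_le_pi hφ.1 hφ.2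
  rcases hu with h | h | ⟨h, hre⟩
  · simp [neg_eq_zero.1 h, rotIm]
  · simp only [Complex.neg_im] at h
    linarith
  · simp only [Complex.neg_im, Complex.neg_re, neg_eq_zero] at h hre
    simp only [rotIm, h, zero_mul, zero_sub, neg_nonpos]
    exact mul_nonneg (by linarith) hsin

lemma integral_max_zero_rotIm {d : ℂ} (hd : 0 ≤ d.im) :
    ∫ φ in (0 : ℝ)..π, max 0 (rotIm d φ) = ‖d‖ - d.re := by
  have harg : 0 ≤ d.arg := Complex.arg_nonneg_iff.2 hd
  have hπ : d.arg ≤ π := Complex.arg_le_pi d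
  have hcont : Continuous fun φ => max 0 (rotIm d φ) := by unfold rotIm; fun_prop
  rw [← intervalIntegral.integral_add_adjacent_intervals (b := d.arg)
    (hcont.intervalIntegrable _ _) (hcont.intervalIntegrable _ _)]
  have hpos : ∫ φ in (0 : ℝ)..d.arg, max 0 (rotIm d φ)
      = ∫ φ in (0 : ℝ)..d.arg, (d.im * cos φ - d.re * sin φ) := by
    refine intervalIntegral.integral_congr fun φ hφ => max_eq_right ?_
    rw [Set.uIcc_of_le harg] at hφ
    rw [rotIm_eq_norm_mul_sin]
    exact mul_nonneg (norm_nonneg d)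
      (sin_nonneg_of_nonneg_of_le_pi (by linarith [hφ.2]) (by linarith [hφ.1]))
  have hzero : ∫ φ in d.arg..π, max 0 (rotIm d φ) = ∫ _ in d.arg..π, (0 : ℝ) := by
    refine intervalIntegral.integral_congr fun φ hφ => max_eq_left ?_
    rw [Set.uIcc_of_le hπ] at hφ
    rw [rotIm_eq_norm_mul_sin]
    exact mul_nonpos_of_nonneg_of_nonpos (norm_nonneg d)
      (sin_nonpos_of_nonpos_of_neg_pi_le (by linarith [hφ.1]) (by linarith [hφ.2]))
  rw [hpos, hzero, intervalIntegral.integral_zero, add_zero, intervalIntegral.integral_sub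
    (f := fun φ => d.im * cos φ) (g := fun φ => d.re * sin φ)
    ((continuous_const.mul continuous_cos).intervalIntegrable _ _)
    ((continuous_const.mul continuous_sin).intervalIntegrable _ _),
    intervalIntegral.integral_const_mul, intervalIntegral.integral_const_mul,
    integral_cos, integral_sin, sin_zero, cos_zero]
  have hcos := Complex.norm_mul_cos_arg d
  have hsin := Complex.norm_mul_sin_arg d
  linear_combination -sin d.arg * hsin - cos d.arg * hcos + ‖d‖ * sin_sq_add_cos_sq d.arg

noncomputable def ascent (v : ℕ → ℂ) (n : ℕ) (φ : ℝ) : ℝ :=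
  ∑ i ∈ range n, max 0 (rotIm (v (i + 1) - v i) φ)

lemma continuous_ascent (v : ℕ → ℂ) (n : ℕ) : Continuous (ascent v n) := by
  unfold ascent rotIm
  fun_prop

lemma integral_ascent {v : ℕ → ℂ} {n : ℕ} (hv : ∀ i < n, 0 ≤ (v (i + 1) - v i).im) :
    ∫ φ in (0 : ℝ)..π, ascent v n φ = ∑ i ∈ range n, ‖v (i + 1) - v i‖ - (v n).re + (v 0).re := by
  unfold ascent
  rw [intervalIntegral.integral_finsetSum fun i _ => by
    apply Continuous.intervalIntegrable
    unfold rotIm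
    fun_prop]
  rw [Finset.sum_congr rfl fun i hi => integral_max_zero_rotIm (hv i (mem_range.1 hi)),
    sum_sub_distrib]
  simp only [Complex.sub_re]
  rw [sum_range_sub (fun i => (v i).re)]
  ring

lemma sum_rotIm_edges (v : ℕ → ℂ) (m : ℕ) (φ : ℝ) :
    ∑ i ∈ range m, rotIm (v (i + 1) - v i) φ = rotIm (v m - v 0) φ := by
  simp only [rotIm_sub]
  exact sum_range_sub (fun i => rotIm (v i) φ) m

lemma rotIm_sub_le_ascent (v : ℕ → ℂ) {m n : ℕ} (hmn : m ≤ n) (φ : ℝ) :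
    rotIm (v m - v 0) φ ≤ ascent v n φ := by
  rw [← sum_rotIm_edges]
  calc ∑ i ∈ range m, rotIm (v (i + 1) - v i) φ
      ≤ ∑ i ∈ range m, max 0 (rotIm (v (i + 1) - v i) φ) :=
        sum_le_sum fun i _ => le_max_right _ _
    _ ≤ ascent v n φ :=
        sum_le_sum_of_subset_of_nonneg (range_mono hmn) fun i _ _ => le_max_left _ _

lemma sub_mem_insert_zero_of_le {v : ℕ → ℂ} {n : ℕ} (hv : ∀ i < n, v (i + 1) - v i ∈ ℍ) {i j : ℕ}
    (hij : i ≤ j) (hjn : j ≤ n) : v j - v i ∈ insert 0 ℍ := by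
  induction j, hij using Nat.le_induction with
  | base => simp
  | succ j hij ih =>
    rw [show v (j + 1) - v i = (v j - v i) + (v (j + 1) - v j) by ring]
    exact add_mem_insert_zero (ih (by omega)) (Or.inr (hv j (by omega)))

lemma exists_forall_lt_le_and_lt (θ : ℕ → ℝ) (n : ℕ) (φ : ℝ) :
    ∃ m ≤ n, (∀ j < m, φ ≤ θ j) ∧ (m < n → θ m < φ) := by
  classical
  have hex : ∃ j, j = n ∨ θ j < φ := ⟨n, Or.inl rfl⟩
  refine ⟨Nat.find hex, Nat.find_min' hex (Or.inl rfl), fun j hj => ?_, fun hlt => ?_⟩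
  · exact le_of_not_gt fun h => Nat.find_min hex hj (Or.inr h)
  · exact (Nat.find_spec hex).resolve_left hlt.ne

/-- On a convex path the edges of phase at least `φ` come first, so the ascent is a partial sum. -/
lemma exists_ascent_eq_rotIm {v : ℕ → ℂ} {n : ℕ} (hv : ∀ i < n, v (i + 1) - v i ∈ ℍ)
    (hconv : ∀ i, i + 1 < n → (v (i + 2) - v (i + 1)).arg ≤ (v (i + 1) - v i).arg)
    {φ : ℝ} (hφ : φ ∈ Set.Icc 0 π) : ∃ c ≤ n, ascent v n φ = rotIm (v c - v 0) φ := by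
  obtain ⟨c, hcn, hbefore, hafter⟩ :=
    exists_forall_lt_le_and_lt (fun i => (v (i + 1) - v i).arg) n φ
  have hafter' : ∀ i, c ≤ i → i < n → (v (i + 1) - v i).arg < φ := by
    intro i hci
    induction i, hci using Nat.le_induction with
    | base => exact hafter
    | succ i hci ih => exact fun hin => (hconv i hin).trans_lt (ih (by omega))
  refine ⟨c, hcn, ?_⟩
  rw [ascent, ← sum_range_add_sum_Ico _ hcn, ← sum_rotIm_edges]
  have htail : ∑ i ∈ Ico c n, max 0 (rotIm (v (i + 1) - v i) φ) = 0 := by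
    refine sum_eq_zero fun i hi => max_eq_left ?_
    obtain ⟨hci, hin⟩ := mem_Ico.1 hi
    exact le_of_lt (not_le.1 fun h =>
      (hafter' i hci hin).not_ge ((rotIm_nonneg_iff (hv i hin) hφ).1 h))
  rw [htail, add_zero]
  exact sum_congr rfl fun i hi => max_eq_right
    ((rotIm_nonneg_iff (hv i (by simp at hi; omega)) hφ).2 (hbefore i (mem_range.1 hi)))

/-- At the vertex `e m` where the edge phases cross `φ`, the point `w` lies to the right of the two
edges meeting there; at the ends, the horizontal rays through `e 0` and `e l` take their place. -/
lemma exists_rotIm_sub_nonpos {e : ℕ → ℂ} {l : ℕ} (he : ∀ j < l, e (j + 1) - e j ∈ ℍ) {w : ℂ}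
    (hw0 : (e 0).im ≤ w.im) (hwl : e l - w ∈ insert 0 ℍ)
    (hw : ∀ j < l, (e (j + 1) - e j).re * (w - e j).im - (e (j + 1) - e j).im * (w - e j).re ≤ 0)
    {φ : ℝ} (hφ : φ ∈ Set.Icc 0 π) : ∃ m ≤ l, rotIm (w - e m) φ ≤ 0 := by
  obtain ⟨m, hml, hbefore, hafter⟩ :=
    exists_forall_lt_le_and_lt (fun j => (e (j + 1) - e j).arg) l φ
  refine ⟨m, hml, ?_⟩
  have hright : ∀ j < l, rotIm (w - e j) (e (j + 1) - e j).arg ≤ 0 := fun j hj =>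
    nonpos_of_mul_nonpos_right ((norm_mul_rotIm_arg _ _).trans_le (hw j hj))
      (norm_pos_iff.2 (ne_zero_of_mem_semiclosedUpperHalfPlane (he j hj)))
  obtain ⟨α, hφα, hαπ, hα⟩ : ∃ α, φ ≤ α ∧ α ≤ π ∧ rotIm (w - e m) α ≤ 0 := by
    cases m with
    | zero => exact ⟨π, hφ.2, le_rfl, by simpa [rotIm] using hw0⟩
    | succ m =>
      refine ⟨_, hbefore m m.lt_succ_self, Complex.arg_le_pi _, ?_⟩
      rw [show w - e (m + 1) = (w - e m) - (e (m + 1) - e m) by ring, rotIm_sub, rotIm_arg_self,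
        sub_zero]
      exact hright m (by omega)
  rcases hml.lt_or_eq with hm | rfl
  · exact rotIm_nonpos_of_mem_Icc ⟨(hafter hm).le, hφα⟩
      (by linarith [arg_pos_of_mem_semiclosedUpperHalfPlane (he m hm)]) hα (hright m hm)
  rcases hαπ.lt_or_eq with hα' | rfl
  · have hβ : rotIm (w - e m) 0 ≤ 0 := by
      simpa [rotIm] using im_nonneg_of_mem_insert_zero hwl
    exact rotIm_nonpos_of_mem_Icc ⟨hφ.1, hφα⟩ (by linarith) hα hβ
  · exact rotIm_nonpos_of_neg_mem (by simpa using hwl) hα hφ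

end HNPolygon

open HNPolygon

theorem stmt12_general (k l : ℕ) (a e : ℕ → ℂ) (zA zE : ℂ)
    (ha0 : a 0 = 0) (hak : a k = zA) (he0 : e 0 = 0) (hel : e l = zE)
    (hda : ∀ i < k, 0 < (a (i + 1) - a i).im ∨
      ((a (i + 1) - a i).im = 0 ∧ (a (i + 1) - a i).re < 0))
    (hde : ∀ j < l, 0 < (e (j + 1) - e j).im ∨
      ((e (j + 1) - e j).im = 0 ∧ (e (j + 1) - e j).re < 0))
    (haconv : ∀ i, i + 1 < k → (a (i + 2) - a (i + 1)).arg < (a (i + 1) - a i).arg)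
    (hsub : ∀ i ≤ k, ∀ j < l,
      (e (j + 1) - e j).re * (a i - e j).im - (e (j + 1) - e j).im * (a i - e j).re ≤ 0)
    (hquot : zE - zA = 0 ∨ 0 < (zE - zA).im ∨ ((zE - zA).im = 0 ∧ (zE - zA).re < 0)) :
    (∑ i ∈ Finset.range k, ‖a (i + 1) - a i‖) - zA.re ≤
      (∑ j ∈ Finset.range l, ‖e (j + 1) - e j‖) - zE.re := by
  have hpt : ∀ φ ∈ Set.Icc 0 π, ascent a k φ ≤ ascent e l φ := by
    intro φ hφ
    obtain ⟨c, hck, hc⟩ := exists_ascent_eq_rotIm hda (fun i hi => (haconv i hi).le) hφ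
    have hw0 : (e 0).im ≤ (a c).im := by
      simpa [ha0, he0] using
        im_nonneg_of_mem_insert_zero (sub_mem_insert_zero_of_le hda c.zero_le hck)
    have hwl : e l - a c ∈ insert 0 semiclosedUpperHalfPlane := by
      rw [hel, show zE - a c = (zE - zA) + (a k - a c) by rw [hak]; ring]
      exact add_mem_insert_zero hquot (sub_mem_insert_zero_of_le hda hck le_rfl)
    obtain ⟨m, hml, hm⟩ := exists_rotIm_sub_nonpos hde hw0 hwl (hsub c hck) hφ
    rw [rotIm_sub] at hm
    calc ascent a k φ = rotIm (a c - a 0) φ := hc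
      _ ≤ rotIm (e m - e 0) φ := by simp only [rotIm_sub, ha0, he0]; linarith
      _ ≤ ascent e l φ := rotIm_sub_le_ascent e hml φ
  have hint := intervalIntegral.integral_mono_on (μ := MeasureTheory.volume) pi_pos.le
    ((continuous_ascent a k).intervalIntegrable _ _)
    ((continuous_ascent e l).intervalIntegrable _ _) hpt
  rw [integral_ascent fun i hi => im_nonneg_of_mem_insert_zero (Or.inr (hda i hi)),
    integral_ascent fun j hj => im_nonneg_of_mem_insert_zero (Or.inr (hde j hj))] at hint
  simp only [ha0, hak, he0, hel, Complex.zero_re, add_zero] at hint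
  linarith

/-- Comparison of masses of nested HN polygons (Lemma 3.7 of the paper),
formalized for convex polygons in `ℂ` that are polyhedral on the left.  Let
`0 = a₀, a₁, …, a_k = Z(A)` be the vertices of the left boundary of `HN^Z(A)` and
`0 = e₀, e₁, …, e_l = Z(E)` those of `HN^Z(E)`: each consecutive difference lies in the
semi-closed upper half plane `ℍ`, consecutive differences have strictly decreasing phases
(convexity), every vertex `a_i` lies weakly to the right of every oriented edge of the
`e`-path (this is the containment `HN^Z(A) ⊆ HN^Z(E)`), and `Z(E) − Z(A) ∈ ℍ ∪ {0}` (the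
charge of the quotient `E/A`).  Writing `m^Z(A) = ∑ |a_{i+1} − a_i|` and
`m^Z(E) = ∑ |e_{j+1} − e_j|` for the masses (lengths of the left boundaries), we have
`m^Z(A) − Re Z(A) ≤ m^Z(E) − Re Z(E)`. -/
theorem stmt12 (k l : ℕ) (a e : ℕ → ℂ) (zA zE : ℂ)
    (ha0 : a 0 = 0) (hak : a k = zA) (he0 : e 0 = 0) (hel : e l = zE)
    (hda : ∀ i < k, 0 < (a (i + 1) - a i).im ∨
      ((a (i + 1) - a i).im = 0 ∧ (a (i + 1) - a i).re < 0))
    (hde : ∀ j < l, 0 < (e (j + 1) - e j).im ∨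
      ((e (j + 1) - e j).im = 0 ∧ (e (j + 1) - e j).re < 0))
    (haconv : ∀ i, i + 1 < k → (a (i + 2) - a (i + 1)).arg < (a (i + 1) - a i).arg)
    (heconv : ∀ j, j + 1 < l → (e (j + 2) - e (j + 1)).arg < (e (j + 1) - e j).arg)
    (hsub : ∀ i ≤ k, ∀ j < l,
      (e (j + 1) - e j).re * (a i - e j).im - (e (j + 1) - e j).im * (a i - e j).re ≤ 0)
    (hquot : zE - zA = 0 ∨ 0 < (zE - zA).im ∨ ((zE - zA).im = 0 ∧ (zE - zA).re < 0)) :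
    (∑ i ∈ Finset.range k, ‖a (i + 1) - a i‖) - zA.re ≤
      (∑ j ∈ Finset.range l, ‖e (j + 1) - e j‖) - zE.re :=
  stmt12_general k l a e zA zE ha0 hak he0 hel hda hde haconv hsub hquot
end

section
/- Let A ↪ E be a subobject in an abelian category with stability function Z₀ admitting HN filtrations, and suppose E is Z₀-semistable. Write Z₀(A) = a + x where a ∈ ℂ has the same phase as Z₀(E) and x ≥ 0 is real. Then the mass satisfies m^{Z₀}(A) ≤ |a| + x. -/
/-!
All HN factors of `A` have phase in `(0, θ]`, `θ = arg Z₀(E)`: the first one is a nonzero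
subobject of the semistable `E`, and the phases decrease. For `θ < π` the real-linear functional
`w ↦ re (w · e^{-iθ/2})` is at least `|w| cos (θ/2)` on that sector, while on
`Z₀(A) = r e^{iθ} + x` it equals exactly `(r + x) cos (θ/2)`; summing over the factors gives the
bound. For `θ = π` all charges are negative reals, so the mass is `|Z₀(A)| = r - x`.
-/

open CategoryTheory

theorem Complex.norm_mul_cos_le {z : ℂ} {φ ψ : ℝ} (hψ : ψ ≤ Real.pi) (h : |z.arg - φ| ≤ ψ) :
    ‖z‖ * Real.cos ψ ≤ z.re * Real.cos φ + z.im * Real.sin φ := by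
  calc ‖z‖ * Real.cos ψ ≤ ‖z‖ * Real.cos (z.arg - φ) := by
        rw [← Real.cos_abs (z.arg - φ)]
        exact mul_le_mul_of_nonneg_left
          (Real.cos_le_cos_of_nonneg_of_le_pi (abs_nonneg _) hψ h) (norm_nonneg z)
    _ = z.re * Real.cos φ + z.im * Real.sin φ := by
        rw [Real.cos_sub, ← norm_mul_cos_arg, ← norm_mul_sin_arg]; ring

theorem Complex.arg_pos_iff {z : ℂ} : 0 < z.arg ↔ 0 < z.im ∨ (z.im = 0 ∧ z.re < 0) := by
  rw [lt_iff_le_and_ne, ne_comm, Ne, arg_nonneg_iff, arg_eq_zero_iff]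
  constructor
  · rintro ⟨him, hz⟩
    rcases him.lt_or_eq with him | him
    · exact .inl him
    · exact .inr ⟨him.symm, by grind⟩
  · rintro (him | ⟨him, hre⟩) <;> grind

theorem sum_norm_le_of_arg_mem_Ioc_of_lt_pi {ι : Type*} {s : Finset ι} {z : ι → ℂ}
    {θ r x : ℝ} (hθ : θ < Real.pi) (hr : 0 ≤ r) (hx : 0 ≤ x)
    (hz : ∀ i ∈ s, (z i).arg ∈ Set.Ioc 0 θ)
    (hsum : ∑ i ∈ s, z i = r * Complex.exp (θ * Complex.I) + x) :
    ∑ i ∈ s, ‖z i‖ ≤ r + x := by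
  rcases s.eq_empty_or_nonempty with rfl | ⟨i₀, hi₀⟩
  · simpa using add_nonneg hr hx
  have hθ₀ : 0 < θ := (hz i₀ hi₀).1.trans_le (hz i₀ hi₀).2
  have hcos : 0 < Real.cos (θ / 2) :=
    Real.cos_pos_of_mem_Ioo ⟨by linarith [Real.pi_pos], by linarith⟩
  have hpt : ∀ i ∈ s, ‖z i‖ * Real.cos (θ / 2) ≤
      (z i).re * Real.cos (θ / 2) + (z i).im * Real.sin (θ / 2) :=
    fun i hi => Complex.norm_mul_cos_le (by linarith)
      (abs_le.mpr ⟨by linarith [(hz i hi).1], by linarith [(hz i hi).2]⟩)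
  refine le_of_mul_le_mul_right ?_ hcos
  calc (∑ i ∈ s, ‖z i‖) * Real.cos (θ / 2)
      ≤ (∑ i ∈ s, z i).re * Real.cos (θ / 2) + (∑ i ∈ s, z i).im * Real.sin (θ / 2) := by
        rw [Finset.sum_mul, Complex.re_sum, Complex.im_sum, Finset.sum_mul, Finset.sum_mul,
          ← Finset.sum_add_distrib]
        exact Finset.sum_le_sum hpt
    _ = r * Real.cos (θ - θ / 2) + x * Real.cos (θ / 2) := by
        rw [hsum, Real.cos_sub]
        simp only [Complex.add_re, Complex.mul_re, Complex.ofReal_re, Complex.exp_ofReal_mul_I_re,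
          Complex.ofReal_im, Complex.exp_ofReal_mul_I_im, zero_mul, sub_zero, Complex.add_im,
          Complex.mul_im, add_zero]
        ring
    _ = (r + x) * Real.cos (θ / 2) := by ring_nf

theorem sum_norm_le_of_arg_pos_pi {ι : Type*} {s : Finset ι} {z : ι → ℂ}
    {r x : ℝ} (hx : 0 ≤ x) (hz : ∀ i ∈ s, 0 < (z i).arg)
    (hsum : ∑ i ∈ s, z i = r * Complex.exp (Real.pi * Complex.I) + x) :
    ∑ i ∈ s, ‖z i‖ ≤ r + x := by
  rw [Complex.exp_pi_mul_I] at hsum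
  have him : ∀ i ∈ s, (z i).im = 0 := by
    refine (Finset.sum_eq_zero_iff_of_nonneg fun i hi => ?_).mp ?_
    · exact Complex.arg_nonneg_iff.mp (hz i hi).le
    · rw [← Complex.im_sum, hsum]; simp
  have hnorm : ∀ i ∈ s, ‖z i‖ = -(z i).re := fun i hi => by
    have hre : (z i).re < 0 := by
      simpa [him i hi] using Complex.arg_pos_iff.mp (hz i hi)
    rw [← Complex.abs_re_eq_norm.mpr (him i hi), abs_of_neg hre]
  calc ∑ i ∈ s, ‖z i‖ = -(∑ i ∈ s, z i).re := by
        rw [Complex.re_sum, ← Finset.sum_neg_distrib]; exact Finset.sum_congr rfl hnorm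
    _ = r - x := by
        simp only [hsum, mul_neg, mul_one, Complex.add_re, Complex.neg_re, Complex.ofReal_re,
          neg_add_rev, neg_neg]
        ring
    _ ≤ r + x := by linarith

theorem sum_norm_le_of_arg_mem_Ioc {ι : Type*} {s : Finset ι} {z : ι → ℂ}
    {θ r x : ℝ} (hθ : θ ≤ Real.pi) (hr : 0 ≤ r) (hx : 0 ≤ x)
    (hz : ∀ i ∈ s, (z i).arg ∈ Set.Ioc 0 θ)
    (hsum : ∑ i ∈ s, z i = r * Complex.exp (θ * Complex.I) + x) :
    ∑ i ∈ s, ‖z i‖ ≤ r + x := by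
  rcases hθ.lt_or_eq with hθ | rfl
  · exact sum_norm_le_of_arg_mem_Ioc_of_lt_pi hθ hr hx hz hsum
  · exact sum_norm_le_of_arg_pos_pi hx (fun i hi => (hz i hi).1) hsum

theorem Fin.last_eq_zero_add_sum {M : Type*} [AddCommMonoid M] :
    ∀ {n : ℕ} (v : Fin (n + 1) → M) (w : Fin n → M),
      (∀ i, v i.succ = v i.castSucc + w i) → v (Fin.last n) = v 0 + ∑ i, w i
  | 0, v, w, _ => by simp
  | n + 1, v, w, h => by
    have ih := Fin.last_eq_zero_add_sum (v ∘ Fin.castSucc) (w ∘ Fin.castSucc)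
      fun i => h i.castSucc
    rw [Fin.sum_univ_castSucc, ← add_assoc]
    exact (h (Fin.last n)).trans (congrArg (· + w (Fin.last n)) ih)

theorem exists_mono_to_last {C : Type*} [Category C] {n : ℕ} {X : Fin (n + 1) → C}
    (f : ∀ i : Fin n, X i.castSucc ⟶ X i.succ) [∀ i, Mono (f i)] (k : Fin (n + 1)) :
    ∃ g : X k ⟶ X (Fin.last n), Mono g := by
  induction k using Fin.reverseInduction with
  | last => exact ⟨𝟙 _, inferInstance⟩
  | cast i ih =>
    obtain ⟨g, _⟩ := ih
    exact ⟨f i ≫ g, mono_comp _ _⟩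

theorem eq_zero_of_isZero_of_additive {C : Type*} [Category C] [Abelian C]
    {M : Type*} [AddCancelCommMonoid M] {Z : C → M}
    (hZ : ∀ S : ShortComplex C, S.ShortExact → Z S.X₂ = Z S.X₁ + Z S.X₃)
    {F : C} (hF : Limits.IsZero F) : Z F = 0 := by
  have hS : (ShortComplex.mk (𝟙 F) (𝟙 F) (hF.eq_of_src _ _)).ShortExact :=
    { exact := ShortComplex.exact_of_isZero_X₂ _ hF }
  exact left_eq_add.mp (hZ _ hS)

theorem not_isZero_of_arg_pos {C : Type*} [Category C] [Abelian C] {Z : C → ℂ}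
    (hZ : ∀ S : ShortComplex C, S.ShortExact → Z S.X₂ = Z S.X₁ + Z S.X₃)
    {F : C} (h : 0 < (Z F).arg) : ¬ Limits.IsZero F := fun hF => by
  simp [eq_zero_of_isZero_of_additive hZ hF] at h

theorem stmt15_general {C : Type*} [Category C] [Abelian C]
    (Z : C → ℂ)
    (hZadd : ∀ S : ShortComplex C, S.ShortExact → Z S.X₂ = Z S.X₁ + Z S.X₃)
    (hstab : ∀ F : C, ¬ Limits.IsZero F →
      0 < (Z F).im ∨ ((Z F).im = 0 ∧ (Z F).re < 0))
    (E : C)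
    (hEss : ∀ (B : C) (g : B ⟶ E), Mono g → ¬ Limits.IsZero B → (Z B).arg ≤ (Z E).arg)
    (A : C) (ιA : A ⟶ E) (hιA : Mono ιA)
    (n : ℕ) (X : Fin (n + 1) → C) (f : ∀ i : Fin n, X i.castSucc ⟶ X i.succ)
    (G : Fin n → C)
    (hX0 : Limits.IsZero (X 0)) (hXn : X (Fin.last n) = A)
    (hmono : ∀ i, Mono (f i))
    (hses : ∀ i : Fin n, ∃ (g : X i.succ ⟶ G i) (w : f i ≫ g = 0),
      (ShortComplex.mk (f i) g w).ShortExact)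
    (hG0 : ∀ i, ¬ Limits.IsZero (G i))
    (hdec : ∀ i j : Fin n, i < j → (Z (G j)).arg < (Z (G i)).arg)
    (a : ℂ) (r x : ℝ) (hr : 0 ≤ r) (hx : 0 ≤ x)
    (ha : a = ((r : ℝ) : ℂ) * Complex.exp ((((Z E).arg : ℝ) : ℂ) * Complex.I))
    (hZA : Z A = a + ((x : ℝ) : ℂ)) :
    ∑ i, ‖Z (G i)‖ ≤ ‖a‖ + x := by
  have hstep : ∀ i, Z (X i.succ) = Z (X i.castSucc) + Z (G i) := fun i => by
    obtain ⟨g, w, hS⟩ := hses i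
    exact hZadd _ hS
  have hpos : ∀ i, 0 < (Z (G i)).arg := fun i => Complex.arg_pos_iff.mpr (hstab _ (hG0 i))
  have hle : ∀ i, (Z (G i)).arg ≤ (Z E).arg := by
    intro i
    have : NeZero n := ⟨i.pos.ne'⟩
    have hX₁ : Z (X (0 : Fin n).succ) = Z (G 0) := by
      rw [hstep, Fin.castSucc_zero, eq_zero_of_isZero_of_additive hZadd hX0, zero_add]
    have hX₁nz : ¬ Limits.IsZero (X (0 : Fin n).succ) :=
      not_isZero_of_arg_pos hZadd (hX₁ ▸ hpos 0)
    have := hmono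
    obtain ⟨g, _⟩ := exists_mono_to_last f (0 : Fin n).succ
    have hG₀ : (Z (G 0)).arg ≤ (Z E).arg :=
      hX₁ ▸ hEss _ (g ≫ eqToHom hXn ≫ ιA) inferInstance hX₁nz
    rcases (Fin.zero_le i).eq_or_lt with rfl | hi
    · exact hG₀
    · exact (hdec 0 i hi).le.trans hG₀
  have hsum : ∑ i, Z (G i) = r * Complex.exp ((Z E).arg * Complex.I) + x := by
    have h := Fin.last_eq_zero_add_sum (fun k => Z (X k)) (fun i => Z (G i)) hstep
    beta_reduce at h
    rw [hXn, hZA, ha, eq_zero_of_isZero_of_additive hZadd hX0, zero_add] at h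
    exact h.symm
  have hnorm : ‖a‖ = r := by
    rw [ha, norm_mul, Complex.norm_exp_ofReal_mul_I, Complex.norm_real, Real.norm_of_nonneg hr,
      mul_one]
  rw [hnorm]
  exact sum_norm_le_of_arg_mem_Ioc (Complex.arg_le_pi _) hr hx
    (fun i _ => ⟨hpos i, hle i⟩) hsum

/-- Let `A ↪ E` be a subobject in an abelian category with stability
function `Z₀` (additive on short exact sequences, valued in the semi-closed upper half
plane on nonzero objects) admitting HN filtrations, and suppose `E` is `Z₀`-semistable
(every nonzero subobject has phase, i.e. `arg` of its charge, at most that of `E`).  Write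
`Z₀(A) = a + x` where `a ∈ ℂ` has the same phase as `Z₀(E)` (i.e. `a = r·e^{i·arg Z₀(E)}`
with `r ≥ 0`) and `x ≥ 0` is real.  Then the mass of `A`, computed from any HN filtration
`0 = X₀ ↪ … ↪ X_n = A` with semistable factors `G_i` of strictly decreasing phases as
`m^{Z₀}(A) = ∑ᵢ |Z₀(G_i)|`, satisfies `m^{Z₀}(A) ≤ |a| + x`. -/
theorem stmt15 {C : Type*} [Category C] [Abelian C]
    (Z : C → ℂ)
    (hZadd : ∀ S : ShortComplex C, S.ShortExact → Z S.X₂ = Z S.X₁ + Z S.X₃)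
    (hstab : ∀ F : C, ¬ Limits.IsZero F →
      0 < (Z F).im ∨ ((Z F).im = 0 ∧ (Z F).re < 0))
    (E : C) (hE : ¬ Limits.IsZero E)
    (hEss : ∀ (B : C) (g : B ⟶ E), Mono g → ¬ Limits.IsZero B → (Z B).arg ≤ (Z E).arg)
    (A : C) (ιA : A ⟶ E) (hιA : Mono ιA)
    (n : ℕ) (X : Fin (n + 1) → C) (f : ∀ i : Fin n, X i.castSucc ⟶ X i.succ)
    (G : Fin n → C)
    (hX0 : Limits.IsZero (X 0)) (hXn : X (Fin.last n) = A)
    (hmono : ∀ i, Mono (f i))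
    (hses : ∀ i : Fin n, ∃ (g : X i.succ ⟶ G i) (w : f i ≫ g = 0),
      (ShortComplex.mk (f i) g w).ShortExact)
    (hG0 : ∀ i, ¬ Limits.IsZero (G i))
    (hGss : ∀ (i : Fin n) (B : C) (g : B ⟶ G i), Mono g → ¬ Limits.IsZero B →
      (Z B).arg ≤ (Z (G i)).arg)
    (hdec : ∀ i j : Fin n, i < j → (Z (G j)).arg < (Z (G i)).arg)
    (a : ℂ) (r x : ℝ) (hr : 0 ≤ r) (hx : 0 ≤ x)
    (ha : a = ((r : ℝ) : ℂ) * Complex.exp ((((Z E).arg : ℝ) : ℂ) * Complex.I))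
    (hZA : Z A = a + ((x : ℝ) : ℂ)) :
    ∑ i, ‖Z (G i)‖ ≤ ‖a‖ + x :=
  stmt15_general Z hZadd hstab E hEss A ιA hιA n X f G hX0 hXn hmono hses hG0 hdec a r x hr hx ha
    hZA
end

section
/- Let P, Q be two slicings of a triangulated category D, with phase functions φ^± (for P) and ψ^± (for Q) recording the maximal and minimal HN phases of objects. Define d(P,Q) = sup over all nonzero E ∈ D of max(|φ⁺(E) − ψ⁺(E)|, |φ⁻(E) − ψ⁻(E)|), and d'(P,Q) = sup over φ ∈ ℝ and nonzero E ∈ P(φ) of max(ψ⁺(E) − φ, φ − ψ⁻(E)). Then d(P,Q) = d'(P,Q). -/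
/-!
If `W ∈ P(c)` maps nonzero to `E`, then `c ≤ φ⁺(E)`: otherwise the map dies on every HN factor
of `E`, hence, climbing the HN tower, on `E`. Dually a nonzero map `E ⟶ W` gives `φ⁻(E) ≤ c`.
Conversely the top HN factor of `E` maps nonzero to `E`, and `E` maps nonzero to its bottom
factor. For `E ∈ P(φ)` this forces `φ⁺(E) = φ⁻(E) = φ`, whence `d' ≤ d`. For `d ≤ d'`, each of
the four one-sided differences `±(φ^±(E) - ψ^±(E))` is bounded by the `d'`-term of a suitable
`P`-semistable object: the top (bottom) `P`-factor of `E`, or a `P`-factor of `E` receiving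
(emitting) a nonzero map from (to) the top (bottom) `Q`-factor of `E`.
-/

open CategoryTheory CategoryTheory.Limits CategoryTheory.Pretriangulated

/-- An HN filtration `0 = X₀ → X₁ → ⋯ → X_{n+1} ≅ E` whose cones `A i ∈ P (φs i)` are nonzero,
with phases strictly decreasing from `φmax` to `φmin`. -/
def IsHNFiltration {C : Type*} [Category C] [Preadditive C] [HasZeroObject C]
    [HasShift C ℤ] [∀ n : ℤ, (shiftFunctor C n).Additive] [Pretriangulated C]
    (P : ℝ → Set C) (φmax φmin : ℝ) (E : C) : Prop :=
  ∃ (n : ℕ) (X : Fin (n + 2) → C) (A : Fin (n + 1) → C) (φs : Fin (n + 1) → ℝ),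
    StrictAnti φs ∧ IsZero (X 0) ∧ Nonempty (X (Fin.last (n + 1)) ≅ E) ∧
    φs 0 = φmax ∧ φs (Fin.last n) = φmin ∧
    ∀ i : Fin (n + 1), ¬ IsZero (A i) ∧ A i ∈ P (φs i) ∧
      ∃ (f : X i.castSucc ⟶ X i.succ) (g : X i.succ ⟶ A i)
        (h : A i ⟶ (X i.castSucc)⟦(1 : ℤ)⟧),
        Triangle.mk f g h ∈ distTriang C

/-- `φplus E`, `φminus E` are the phases `φ⁺(E)`, `φ⁻(E)`; they are arbitrary on zero objects. -/
structure SlicingData (C : Type*) [Category C] [Preadditive C] [HasZeroObject C]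
    [HasShift C ℤ] [∀ n : ℤ, (shiftFunctor C n).Additive] [Pretriangulated C] where
  P : ℝ → Set C
  isoClosed : ∀ (φ : ℝ) (X Y : C), (X ≅ Y) → X ∈ P φ → Y ∈ P φ
  shift : ∀ (φ : ℝ) (X : C), X ∈ P (φ + 1) ↔ ∃ Y ∈ P φ, Nonempty (X ≅ Y⟦(1 : ℤ)⟧)
  homZero : ∀ (φ₁ φ₂ : ℝ), φ₂ < φ₁ → ∀ X ∈ P φ₁, ∀ Y ∈ P φ₂, ∀ f : X ⟶ Y, f = 0
  φplus : C → ℝ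
  φminus : C → ℝ
  hn : ∀ E : C, ¬ IsZero E → IsHNFiltration P (φplus E) (φminus E) E

section

variable {C : Type*} [Category C] [Preadditive C] [HasZeroObject C]
  [HasShift C ℤ] [∀ n : ℤ, (shiftFunctor C n).Additive] [Pretriangulated C]

def IsTriangleTower {n : ℕ} (X : Fin (n + 2) → C) (A : Fin (n + 1) → C) : Prop :=
  ∀ i : Fin (n + 1), ∃ (f : X i.castSucc ⟶ X i.succ) (g : X i.succ ⟶ A i)
    (h : A i ⟶ (X i.castSucc)⟦(1 : ℤ)⟧), Triangle.mk f g h ∈ distTriang C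

namespace IsTriangleTower

variable {n : ℕ} {X : Fin (n + 2) → C} {A : Fin (n + 1) → C}

lemma shift (hT : IsTriangleTower X A) (k : ℤ) :
    IsTriangleTower (fun j => (X j)⟦k⟧) (fun i => (A i)⟦k⟧) := fun i => by
  obtain ⟨f, g, h, hT⟩ := hT i
  exact ⟨_, _, _, Triangle.shift_distinguished _ hT k⟩

lemma hom_from_eq_zero (hT : IsTriangleTower X A) (h0 : IsZero (X 0)) {W : C}
    (hA : ∀ i (g : A i ⟶ W), g = 0) (j : Fin (n + 2)) (f : X j ⟶ W) : f = 0 := by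
  induction j using Fin.induction with
  | zero => exact h0.eq_of_src f 0
  | succ i ih =>
    obtain ⟨f', g, h, hT⟩ := hT i
    obtain ⟨u, rfl⟩ := Triangle.yoneda_exact₂ _ hT f (ih _)
    rw [hA i u]
    exact comp_zero

lemma hom_to_eq_zero (hT : IsTriangleTower X A) (h0 : IsZero (X 0)) {W : C}
    (hA : ∀ i (g : W ⟶ A i), g = 0) (j : Fin (n + 2)) (f : W ⟶ X j) : f = 0 := by
  induction j using Fin.induction with
  | zero => exact h0.eq_of_tgt f 0
  | succ i ih =>
    obtain ⟨f', g, h, hT⟩ := hT i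
    obtain ⟨u, rfl⟩ := Triangle.coyoneda_exact₂ _ hT f (hA i _)
    rw [ih u]
    exact zero_comp

end IsTriangleTower

namespace IsHNFiltration

variable {P : ℝ → Set C} {a b : ℝ} {E W : C}

lemma exists_factor_of_hom_to_ne_zero (hE : IsHNFiltration P a b E) {f : W ⟶ E}
    (hf : f ≠ 0) : ∃ φ ≤ a, ∃ A ∈ P φ, ∃ g : W ⟶ A, g ≠ 0 := by
  obtain ⟨n, X, A, φs, hanti, h0, ⟨e⟩, rfl, -, hfac⟩ := hE
  by_contra! hA
  have hX := IsTriangleTower.hom_to_eq_zero (fun i => (hfac i).2.2) h0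
    (fun i g => hA _ (hanti.antitone (Fin.zero_le i)) _ (hfac i).2.1 g) _ (f ≫ e.inv)
  exact hf ((cancel_mono e.inv).1 (by rw [hX, zero_comp]))

lemma exists_factor_of_hom_from_ne_zero (hE : IsHNFiltration P a b E) {f : E ⟶ W}
    (hf : f ≠ 0) : ∃ φ, b ≤ φ ∧ ∃ A ∈ P φ, ∃ g : A ⟶ W, g ≠ 0 := by
  obtain ⟨n, X, A, φs, hanti, h0, ⟨e⟩, -, rfl, hfac⟩ := hE
  by_contra! hA
  have hX := IsTriangleTower.hom_from_eq_zero (fun i => (hfac i).2.2) h0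
    (fun i g => hA _ (hanti.antitone (Fin.le_last i)) _ (hfac i).2.1 g) _ (e.hom ≫ f)
  exact hf ((cancel_epi e.hom).1 (by rw [hX, comp_zero]))

end IsHNFiltration

namespace SlicingData

variable (S : SlicingData C) {E F W : C}

lemma shift_mem {φ : ℝ} {X : C} (hX : X ∈ S.P φ) : X⟦(1 : ℤ)⟧ ∈ S.P (φ + 1) :=
  (S.shift φ _).2 ⟨X, hX, ⟨Iso.refl _⟩⟩

lemma shift_neg_one_mem {φ : ℝ} {X : C} (hX : X ∈ S.P φ) : X⟦(-1 : ℤ)⟧ ∈ S.P (φ - 1) := by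
  obtain ⟨Y, hY, ⟨e⟩⟩ := (S.shift (φ - 1) X).1 (by rwa [sub_add_cancel])
  exact S.isoClosed _ Y _
    (((shiftFunctorCompIsoId C (1 : ℤ) (-1 : ℤ) (by ring)).app Y).symm ≪≫
      (shiftFunctor C (-1 : ℤ)).mapIso e.symm) hY

lemma le_of_hom_ne_zero {φ₁ φ₂ : ℝ} {X Y : C} (hX : X ∈ S.P φ₁) (hY : Y ∈ S.P φ₂)
    {f : X ⟶ Y} (hf : f ≠ 0) : φ₁ ≤ φ₂ :=
  not_lt.1 fun h => hf (S.homZero _ _ h _ hX _ hY f)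

lemma le_φplus_of_hom_ne_zero {c : ℝ} (hW : W ∈ S.P c) {f : W ⟶ E} (hf : f ≠ 0) :
    c ≤ S.φplus E := by
  have hE : ¬ IsZero E := fun h => hf (h.eq_of_tgt _ _)
  obtain ⟨φ, hφ, A, hA, g, hg⟩ := (S.hn E hE).exists_factor_of_hom_to_ne_zero hf
  exact (S.le_of_hom_ne_zero hW hA hg).trans hφ

lemma φminus_le_of_hom_ne_zero {c : ℝ} (hW : W ∈ S.P c) {f : E ⟶ W} (hf : f ≠ 0) :
    S.φminus E ≤ c := by
  have hE : ¬ IsZero E := fun h => hf (h.eq_of_src _ _)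
  obtain ⟨φ, hφ, A, hA, g, hg⟩ := (S.hn E hE).exists_factor_of_hom_from_ne_zero hf
  exact hφ.trans (S.le_of_hom_ne_zero hA hW hg)

lemma φminus_le_φplus_of_hom_ne_zero {f : E ⟶ F} (hf : f ≠ 0) : S.φminus E ≤ S.φplus F := by
  have hE : ¬ IsZero E := fun h => hf (h.eq_of_src _ _)
  obtain ⟨φ, hφ, A, hA, g, hg⟩ := (S.hn E hE).exists_factor_of_hom_from_ne_zero hf
  exact hφ.trans (S.le_φplus_of_hom_ne_zero hA hg)

lemma exists_mem_φplus_hom_ne_zero (hE : ¬ IsZero E) :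
    ∃ W ∈ S.P (S.φplus E), ∃ f : W ⟶ E, f ≠ 0 := by
  obtain ⟨n, X, A, φs, hanti, h0, ⟨e⟩, hφ0, -, hfac⟩ := S.hn E hE
  obtain ⟨f₀, g₀, h₀, hT₀⟩ := (hfac 0).2.2
  have : IsIso g₀ := (Triangle.isZero₁_iff_isIso₂ _ hT₀).1 h0
  have hW : X (0 : Fin (n + 1)).succ ∈ S.P (S.φplus E) :=
    S.isoClosed _ _ _ (asIso g₀).symm (hφ0 ▸ (hfac 0).2.1)
  have hW0 : ¬ IsZero (X (0 : Fin (n + 1)).succ) :=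
    fun h => (hfac 0).1 (h.of_iso (asIso g₀).symm)
  -- if `c ≫ f = 0`, then `c` factors through `Aᵢ₊₁⟦-1⟧`, whose phase is below that of `X₁ ≅ A₀`
  have key : ∀ i : Fin (n + 1), ∃ c : X (0 : Fin (n + 1)).succ ⟶ X i.succ, c ≠ 0 := by
    intro i
    induction i using Fin.induction with
    | zero => exact ⟨𝟙 _, fun h => hW0 ((IsZero.iff_id_eq_zero _).2 h)⟩
    | succ i ih =>
      obtain ⟨c, hc⟩ := ih
      obtain ⟨f, g, h, hT⟩ := (hfac i.succ).2.2
      refine ⟨c ≫ f, fun hcf => hc ?_⟩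
      obtain ⟨v, rfl⟩ := Triangle.coyoneda_exact₂ _ (inv_rot_of_distTriang _ hT) c hcf
      have hφ := hanti.antitone (Fin.zero_le i.succ)
      rw [S.homZero _ _ (by linarith) _ hW _ (S.shift_neg_one_mem (hfac i.succ).2.1) v]
      exact zero_comp
  obtain ⟨c, hc⟩ := key (Fin.last n)
  exact ⟨_, hW, c ≫ e.hom, fun h => hc ((cancel_mono e.hom).1 (by rw [h, zero_comp]))⟩

lemma exists_mem_φminus_hom_ne_zero (hE : ¬ IsZero E) :
    ∃ W ∈ S.P (S.φminus E), ∃ f : E ⟶ W, f ≠ 0 := by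
  obtain ⟨n, X, A, φs, hanti, h0, ⟨e⟩, -, hφl, hfac⟩ := S.hn E hE
  obtain ⟨f, g, h, hT⟩ := (hfac (Fin.last n)).2.2
  have hX : ∀ u : (X (Fin.last n).castSucc)⟦(1 : ℤ)⟧ ⟶ A (Fin.last n), u = 0 :=
    IsTriangleTower.hom_from_eq_zero (IsTriangleTower.shift (fun i => (hfac i).2.2) 1)
      ((shiftFunctor C (1 : ℤ)).map_isZero h0)
      (fun i u => S.homZero _ _ (by linarith [hanti.antitone (Fin.le_last i)]) _
        (S.shift_mem (hfac i).2.1) _ (hfac _).2.1 u) _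
  -- if `g = 0`, the identity of `Aₙ` would factor through `Xₙ⟦1⟧`
  have hg : g ≠ 0 := fun hg0 => by
    obtain ⟨v, hv⟩ := Triangle.yoneda_exact₂ _ (rot_of_distTriang _ hT) (𝟙 _)
      ((Category.comp_id g).trans hg0)
    have hid : 𝟙 (A (Fin.last n)) = 0 := hv.trans (by rw [hX v]; exact comp_zero)
    exact (hfac _).1 ((IsZero.iff_id_eq_zero _).2 hid)
  exact ⟨_, hφl ▸ (hfac _).2.1, e.inv ≫ g,
    fun h => hg ((cancel_epi e.inv).1 (by rw [h, comp_zero]))⟩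

lemma φplus_eq_of_mem {φ : ℝ} (hE : E ∈ S.P φ) (hE0 : ¬ IsZero E) : S.φplus E = φ := by
  obtain ⟨W, hW, f, hf⟩ := S.exists_mem_φplus_hom_ne_zero hE0
  exact le_antisymm (S.le_of_hom_ne_zero hW hE hf)
    (S.le_φplus_of_hom_ne_zero hE (f := 𝟙 E) fun h => hE0 ((IsZero.iff_id_eq_zero E).2 h))

lemma φminus_eq_of_mem {φ : ℝ} (hE : E ∈ S.P φ) (hE0 : ¬ IsZero E) : S.φminus E = φ := by
  obtain ⟨W, hW, f, hf⟩ := S.exists_mem_φminus_hom_ne_zero hE0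
  exact le_antisymm
    (S.φminus_le_of_hom_ne_zero hE (f := 𝟙 E) fun h => hE0 ((IsZero.iff_id_eq_zero E).2 h))
    (S.le_of_hom_ne_zero hE hW hf)

noncomputable def dist (Ps Qs : SlicingData C) : ENNReal :=
  ⨆ E : {E : C // ¬ IsZero E}, ENNReal.ofReal
    (max |Ps.φplus E.1 - Qs.φplus E.1| |Ps.φminus E.1 - Qs.φminus E.1|)

noncomputable def dist' (Ps Qs : SlicingData C) : ENNReal :=
  ⨆ x : {x : C × ℝ // x.1 ∈ Ps.P x.2 ∧ ¬ IsZero x.1}, ENNReal.ofReal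
    (max (Qs.φplus x.1.1 - x.1.2) (x.1.2 - Qs.φminus x.1.1))

variable (Ps Qs : SlicingData C)

lemma ofReal_le_dist' {A : C} {φ r : ℝ} (hA : A ∈ Ps.P φ) (hA0 : ¬ IsZero A)
    (hr : r ≤ max (Qs.φplus A - φ) (φ - Qs.φminus A)) : ENNReal.ofReal r ≤ Ps.dist' Qs :=
  le_iSup_of_le (⟨(A, φ), hA, hA0⟩ : {x : C × ℝ // x.1 ∈ Ps.P x.2 ∧ ¬ IsZero x.1})
    (ENNReal.ofReal_le_ofReal hr)

lemma ofReal_abs_φplus_sub_le_dist' (hE : ¬ IsZero E) :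
    ENNReal.ofReal |Ps.φplus E - Qs.φplus E| ≤ Ps.dist' Qs := by
  rw [abs_eq_max_neg, ENNReal.ofReal_max, neg_sub]
  refine max_le ?_ ?_
  · obtain ⟨W, hW, f, hf⟩ := Ps.exists_mem_φplus_hom_ne_zero hE
    have hW0 : ¬ IsZero W := fun h => hf (h.eq_of_src _ _)
    have := Qs.φminus_le_φplus_of_hom_ne_zero hf
    exact Ps.ofReal_le_dist' Qs hW hW0 (le_max_of_le_right (by linarith))
  · obtain ⟨B, hB, f, hf⟩ := Qs.exists_mem_φplus_hom_ne_zero hE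
    obtain ⟨φ, hφ, A, hA, g, hg⟩ := (Ps.hn E hE).exists_factor_of_hom_to_ne_zero hf
    have hA0 : ¬ IsZero A := fun h => hg (h.eq_of_tgt _ _)
    have := Qs.le_φplus_of_hom_ne_zero hB hg
    exact Ps.ofReal_le_dist' Qs hA hA0 (le_max_of_le_left (by linarith))

lemma ofReal_abs_φminus_sub_le_dist' (hE : ¬ IsZero E) :
    ENNReal.ofReal |Ps.φminus E - Qs.φminus E| ≤ Ps.dist' Qs := by
  rw [abs_eq_max_neg, ENNReal.ofReal_max, neg_sub]
  refine max_le ?_ ?_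
  · obtain ⟨B, hB, f, hf⟩ := Qs.exists_mem_φminus_hom_ne_zero hE
    obtain ⟨φ, hφ, A, hA, g, hg⟩ := (Ps.hn E hE).exists_factor_of_hom_from_ne_zero hf
    have hA0 : ¬ IsZero A := fun h => hg (h.eq_of_src _ _)
    have := Qs.φminus_le_of_hom_ne_zero hB hg
    exact Ps.ofReal_le_dist' Qs hA hA0 (le_max_of_le_right (by linarith))
  · obtain ⟨W, hW, f, hf⟩ := Ps.exists_mem_φminus_hom_ne_zero hE
    have hW0 : ¬ IsZero W := fun h => hf (h.eq_of_tgt _ _)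
    have := Qs.φminus_le_φplus_of_hom_ne_zero hf
    exact Ps.ofReal_le_dist' Qs hW hW0 (le_max_of_le_left (by linarith))

lemma dist_le_dist' : Ps.dist Qs ≤ Ps.dist' Qs :=
  iSup_le fun E => by
    rw [ENNReal.ofReal_max]
    exact max_le (Ps.ofReal_abs_φplus_sub_le_dist' Qs E.2)
      (Ps.ofReal_abs_φminus_sub_le_dist' Qs E.2)

lemma dist'_le_dist : Ps.dist' Qs ≤ Ps.dist Qs :=
  iSup_le fun ⟨⟨E, φ⟩, hE, hE0⟩ => by
    refine le_iSup_of_le (⟨E, hE0⟩ : {E : C // ¬ IsZero E}) (ENNReal.ofReal_le_ofReal ?_)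
    rw [Ps.φplus_eq_of_mem hE hE0, Ps.φminus_eq_of_mem hE hE0]
    exact max_le_max (by rw [abs_sub_comm]; exact le_abs_self _) (le_abs_self _)

end SlicingData

end

/-- For two slicings `P`, `Q` of a triangulated category `D`, with
`φ±`/`ψ±` the extremal HN phases for `P`/`Q`, the generalized distances
`d(P,Q) = sup_{0 ≠ E} max(|φ⁺(E) − ψ⁺(E)|, |φ⁻(E) − ψ⁻(E)|)` and
`d'(P,Q) = sup {max(ψ⁺(E) − φ, φ − ψ⁻(E)) : φ ∈ ℝ, 0 ≠ E ∈ P(φ)}` coincide. -/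
theorem stmt17 {C : Type*} [Category C] [Preadditive C] [HasZeroObject C]
    [HasShift C ℤ] [∀ n : ℤ, (shiftFunctor C n).Additive] [Pretriangulated C]
    (Ps Qs : SlicingData C) :
    (⨆ E : {E : C // ¬ IsZero E}, ENNReal.ofReal
        (max |Ps.φplus E.1 - Qs.φplus E.1| |Ps.φminus E.1 - Qs.φminus E.1|)) =
    (⨆ x : {x : C × ℝ // x.1 ∈ Ps.P x.2 ∧ ¬ IsZero x.1}, ENNReal.ofReal
        (max (Qs.φplus x.1.1 - x.1.2) (x.1.2 - Qs.φminus x.1.1))) :=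
  le_antisymm (Ps.dist_le_dist' Qs) (Ps.dist'_le_dist Qs)
end
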